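/- arXiv:1802.04911 — 6 statements merged into one kernel-verified Lean document; each statement's English description precedes it below -/
import Mathlib

section
/- Let M be an n×n real symmetric positive definite matrix with eigenvalues λ₁ ≥ ... ≥ λₙ. Define φ(M) = tr(M) - log det(M) - n. Then φ(M) ≥ λ₁ + λₙ - 2√(λ₁λₙ) = (√λ₁ - √λₙ)². -/
lemma trace_eq_sum_eig {n : ℕ} (M : Matrix (Fin n) (Fin n) ℝ) (hM : M.IsHermitian) :
    M.trace = ∑ k, hM.eigenvalues k := by
  nth_rewrite 1 [hM.spectral_theorem]
  rw [Unitary.conjStarAlgAut_apply, Matrix.trace_mul_cycle, (Matrix.mem_unitaryGroup_iff').mp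
    (hM.eigenvectorUnitary).2, Matrix.one_mul, Matrix.trace_diagonal]
  simp

/-- For a symmetric positive definite `M` with largest eigenvalue `λ₁` and smallest
eigenvalue `λₙ`, `φ(M) = tr M - log det M - n ≥ λ₁ + λₙ - 2√(λ₁λₙ) = (√λ₁ - √λₙ)²`. -/
theorem stmt_0 {n : ℕ} (M : Matrix (Fin n) (Fin n) ℝ) (hM : M.PosDef)
    (lam1 lamn : ℝ)
    (h1 : IsGreatest (Set.range hM.1.eigenvalues) lam1)
    (h2 : IsLeast (Set.range hM.1.eigenvalues) lamn) :
    lam1 + lamn - 2 * Real.sqrt (lam1 * lamn) ≤ M.trace - Real.log M.det - n ∧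
      lam1 + lamn - 2 * Real.sqrt (lam1 * lamn)
        = (Real.sqrt lam1 - Real.sqrt lamn) ^ 2 := by
  obtain ⟨i, hi⟩ := h1.1
  obtain ⟨j, hj⟩ := h2.1
  have hpos : ∀ k, 0 < hM.1.eigenvalues k := hM.eigenvalues_pos
  have hl1 : 0 < lam1 := hi ▸ hpos i
  have hln : 0 < lamn := hj ▸ hpos j
  have heq : lam1 + lamn - 2 * Real.sqrt (lam1 * lamn)
      = (Real.sqrt lam1 - Real.sqrt lamn) ^ 2 := by
    rw [Real.sqrt_mul hl1.le]
    nlinarith [Real.sq_sqrt hl1.le, Real.sq_sqrt hln.le]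
  refine ⟨?_, heq⟩
  have htr : M.trace = ∑ k, hM.1.eigenvalues k := trace_eq_sum_eig M hM.1
  have hdet : M.det = ∏ k, hM.1.eigenvalues k := by
    simpa using hM.1.det_eq_prod_eigenvalues
  have hlog : Real.log M.det = ∑ k, Real.log (hM.1.eigenvalues k) := by
    rw [hdet, Real.log_prod]
    exact fun k _ => (hpos k).ne'
  have hphi : M.trace - Real.log M.det - n
      = ∑ k, (hM.1.eigenvalues k - Real.log (hM.1.eigenvalues k) - 1) := by
    rw [htr, hlog]
    simp [Finset.sum_sub_distrib]
  rw [hphi]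
  set f : Fin n → ℝ := fun k => hM.1.eigenvalues k - Real.log (hM.1.eigenvalues k) - 1 with hf
  have hfnn : ∀ k, 0 ≤ f k := fun k => by
    have := Real.log_le_sub_one_of_pos (hpos k)
    simp only [hf]; linarith
  by_cases hij : i = j
  · -- then lam1 = lamn
    have hle : lam1 + lamn - 2 * Real.sqrt (lam1 * lamn) = 0 := by
      have h : lam1 = lamn := by rw [← hi, ← hj, hij]
      have hss : Real.sqrt (lamn * lamn) = lamn := Real.sqrt_mul_self hln.le
      rw [h, hss]; ring
    rw [hle]
    exact Finset.sum_nonneg fun k _ => hfnn k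
  · have hsub : f i + f j ≤ ∑ k, f k := by
      have := Finset.sum_le_sum_of_subset_of_nonneg
        (Finset.subset_univ ({i, j} : Finset (Fin n))) (fun k _ _ => hfnn k)
      rwa [Finset.sum_pair hij] at this
    have hfi : f i = lam1 - Real.log lam1 - 1 := by rw [hf]; simp [hi]
    have hfj : f j = lamn - Real.log lamn - 1 := by rw [hf]; simp [hj]
    have ht : 0 < Real.sqrt (lam1 * lamn) := Real.sqrt_pos.mpr (by positivity)
    have hlt : Real.log (Real.sqrt (lam1 * lamn)) ≤ Real.sqrt (lam1 * lamn) - 1 :=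
      Real.log_le_sub_one_of_pos ht
    have hls : Real.log (Real.sqrt (lam1 * lamn)) = (Real.log lam1 + Real.log lamn) / 2 := by
      rw [Real.log_sqrt (by positivity), Real.log_mul hl1.ne' hln.ne']
    rw [hfi, hfj] at hsub
    linarith
end

section
/- The cone K_* := P_V(S^n_+) of projections of positive semidefinite matrices onto a sparsity pattern V (containing the diagonal) is the dual cone of K := S^n_+ ∩ S^n_V with respect to the trace inner product on S^n_V: that is, S ∈ P_V(S^n_+) if and only if tr(SX) ≥ 0 for all X ∈ S^n_+ ∩ S^n_V. -/
open Matrix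

variable {n : ℕ}

lemma stmt8_diag_nonneg {Z : Matrix (Fin n) (Fin n) ℝ} (hZ : Z.PosSemidef) (i : Fin n) :
    0 ≤ Z i i := by
  have h := hZ.dotProduct_mulVec_nonneg (Pi.single i 1)
  simpa [mulVec_single, single_dotProduct] using h

lemma stmt8_trace_mul_nonneg {A B : Matrix (Fin n) (Fin n) ℝ} (hA : A.PosSemidef)
    (hB : B.PosSemidef) : 0 ≤ (A * B).trace := by
  obtain ⟨C, rfl⟩ : ∃ C : Matrix (Fin n) (Fin n) ℝ, B = Cᴴ * C := by
    open scoped MatrixOrder in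
    obtain ⟨X, hX, -, hXX⟩ := CFC.exists_sqrt_of_isSelfAdjoint_of_quasispectrumRestricts
      hB.isHermitian (QuasispectrumRestricts.nnreal_of_nonneg hB.nonneg)
    exact ⟨X, by rw [← hXX, ← star_eq_conjTranspose, hX.star_eq]⟩
  rw [← mul_assoc, trace_mul_comm]
  have h := hA.mul_mul_conjTranspose_same C
  rw [show C * (A * Cᴴ) = C * A * Cᴴ from (mul_assoc _ _ _).symm]
  exact Finset.sum_nonneg fun i _ => stmt8_diag_nonneg h i

lemma stmt8_entry_bound {Z : Matrix (Fin n) (Fin n) ℝ} (hZ : Z.PosSemidef) (i j : Fin n) :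
    |Z i j| ≤ (Z i i + Z j j) / 2 := by
  have hsym : Z j i = Z i j := by
    have h := congrFun (congrFun hZ.1 i) j
    simpa [conjTranspose_apply] using h
  have key : ∀ c : ℝ, 0 ≤ Z i i + c * Z i j + c * Z j i + c * c * Z j j := by
    intro c
    have h := hZ.dotProduct_mulVec_nonneg ((Pi.single i 1 : Fin n → ℝ) + c • (Pi.single j 1 : Fin n → ℝ))
    simp only [star_trivial, mulVec_add, mulVec_smul, mulVec_single, dotProduct_add,
      add_dotProduct, smul_dotProduct, dotProduct_smul, single_dotProduct, dotProduct_single,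
      smul_eq_mul, mul_one, one_mul, Pi.add_apply, Pi.smul_apply, col_apply, MulOpposite.op_one,
      one_smul] at h
    nlinarith [h]
  rw [abs_le]
  constructor <;> nlinarith [key 1, key (-1)]

lemma stmt8_isClosed_psd : IsClosed {A : Matrix (Fin n) (Fin n) ℝ | A.PosSemidef} := by
  have hset : {A : Matrix (Fin n) (Fin n) ℝ | A.PosSemidef} =
      {A : Matrix (Fin n) (Fin n) ℝ | Aᴴ = A} ∩
        ⋂ x : Fin n → ℝ, {A | 0 ≤ star x ⬝ᵥ A *ᵥ x} := by
    ext A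
    simp [posSemidef_iff_dotProduct_mulVec, Matrix.IsHermitian, Set.mem_iInter]
  rw [hset]
  refine (isClosed_eq (continuous_id.matrix_conjTranspose) continuous_id).inter
    (isClosed_iInter fun x => isClosed_le continuous_const ?_)
  exact Continuous.dotProduct continuous_const
    (continuous_id.matrix_mulVec continuous_const)

lemma stmt8_vecMulVec_psd (v : Fin n → ℝ) : (vecMulVec v v).PosSemidef := by
  refine posSemidef_iff_dotProduct_mulVec.mpr ⟨?_, fun x => ?_⟩
  · ext i j
    simp [vecMulVec_apply, conjTranspose_apply, mul_comm]
  · have : vecMulVec v v *ᵥ x = (v ⬝ᵥ x) • v := by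
      ext i
      simp only [vecMulVec_apply, mulVec, dotProduct, Pi.smul_apply, smul_eq_mul,
        Finset.sum_mul, Finset.mul_sum]
      exact Finset.sum_congr rfl fun k _ => by ring
    rw [this]
    simp only [star_trivial, dotProduct_smul, smul_eq_mul]
    have : x ⬝ᵥ v = v ⬝ᵥ x := dotProduct_comm _ _
    rw [this]
    exact mul_self_nonneg _

lemma stmt8_smul_psd {Z : Matrix (Fin n) (Fin n) ℝ} (hZ : Z.PosSemidef) {c : ℝ} (hc : 0 ≤ c) :
    (c • Z).PosSemidef := by
  refine posSemidef_iff_dotProduct_mulVec.mpr ⟨?_, fun x => ?_⟩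
  · show (c • Z)ᴴ = c • Z
    rw [conjTranspose_smul, hZ.1]
    simp
  · rw [smul_mulVec, dotProduct_smul, smul_eq_mul]
    exact mul_nonneg hc (hZ.dotProduct_mulVec_nonneg x)

lemma stmt8_coord_le_norm (x : EuclideanSpace ℝ (Fin n × Fin n)) (p : Fin n × Fin n) :
    |x p| ≤ ‖x‖ := by
  have := EuclideanSpace.norm_eq x
  rw [this]
  rw [show |x p| = Real.sqrt (‖x p‖ ^ 2) by rw [Real.sqrt_sq_eq_abs]; simp]
  apply Real.sqrt_le_sqrt
  exact Finset.single_le_sum (f := fun q => ‖x q‖ ^ 2) (fun q _ => sq_nonneg _) (Finset.mem_univ p)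

lemma stmt8_sum_swap (f : Fin n × Fin n → ℝ) :
    ∑ p : Fin n × Fin n, f (p.2, p.1) = ∑ p : Fin n × Fin n, f p :=
  Fintype.sum_equiv (Equiv.prodComm (Fin n) (Fin n)) _ _ fun p => rfl
open scoped RealInnerProductSpace
variable {n : ℕ}

section Main
variable (V : Set (Fin n × Fin n)) [DecidablePred (· ∈ V)]

/-- the projection-onto-V map followed by the identification with Euclidean space -/
noncomputable def stmt8_L : Matrix (Fin n) (Fin n) ℝ →ₗ[ℝ] EuclideanSpace ℝ (Fin n × Fin n) where
  toFun A := (WithLp.equiv 2 _).symm (fun p => if p ∈ V then A p.1 p.2 else 0)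
  map_add' A B := by
    ext p
    simp only [WithLp.equiv_symm_apply, WithLp.ofLp_toLp, PiLp.add_apply, Matrix.add_apply]
    split_ifs <;> simp
  map_smul' c A := by
    ext p
    simp only [WithLp.equiv_symm_apply, WithLp.ofLp_toLp, PiLp.smul_apply, Matrix.smul_apply, RingHom.id_apply,
      smul_eq_mul]
    split_ifs <;> simp

lemma stmt8_L_apply (A : Matrix (Fin n) (Fin n) ℝ) (p : Fin n × Fin n) :
    stmt8_L V A p = if p ∈ V then A p.1 p.2 else 0 := rfl

lemma stmt8_inner_eq (a b : EuclideanSpace ℝ (Fin n × Fin n)) :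
    ⟪a, b⟫ = ∑ p : Fin n × Fin n, a p * b p := by
  simp [PiLp.inner_apply, RCLike.inner_apply, conj_trivial, mul_comm]

end Main

section Cone
variable (V : Set (Fin n × Fin n)) [DecidablePred (· ∈ V)]

/-- the cone `P_V(S^n_+)` inside Euclidean space -/
noncomputable def stmt8_C : ConvexCone ℝ (EuclideanSpace ℝ (Fin n × Fin n)) where
  carrier := {y | ∃ Z : Matrix (Fin n) (Fin n) ℝ, Z.PosSemidef ∧ y = stmt8_L V Z}
  smul_mem' := by
    rintro c hc y ⟨Z, hZ, rfl⟩
    exact ⟨c • Z, stmt8_smul_psd hZ hc.le, (_root_.map_smul _ _ _).symm⟩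
  add_mem' := by
    rintro y ⟨Z, hZ, rfl⟩ y' ⟨Z', hZ', rfl⟩
    exact ⟨Z + Z', hZ.add hZ', (map_add _ _ _).symm⟩

lemma stmt8_C_closed (hVdiag : ∀ i : Fin n, (i, i) ∈ V) :
    IsClosed (stmt8_C V : Set (EuclideanSpace ℝ (Fin n × Fin n))) := by
  apply IsSeqClosed.isClosed
  intro y z hy hz
  choose Z hZpsd hZeq using hy
  -- a uniform bound on the coordinates of `y`
  obtain ⟨R0, hR0⟩ := (Metric.isBounded_range_of_tendsto y hz).exists_norm_le
  set R : ℝ := R0 with hR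
  have hyb : ∀ k p, |y k p| ≤ R := fun k p =>
    (stmt8_coord_le_norm (y k) p).trans (hR0 _ (Set.mem_range_self k))
  have hdiag : ∀ k i, Z k i i = y k (i, i) := by
    intro k i
    rw [hZeq k, stmt8_L_apply, if_pos (hVdiag i)]
  have hZb : ∀ k i j, |Z k i j| ≤ R := by
    intro k i j
    have h1 := stmt8_entry_bound (hZpsd k) i j
    have h2 : Z k i i ≤ R := by
      have := hyb k (i, i); rw [← hdiag k i] at this
      exact (le_abs_self _).trans this
    have h3 : Z k j j ≤ R := by
      have := hyb k (j, j); rw [← hdiag k j] at this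
      exact (le_abs_self _).trans this
    have hRnn : 0 ≤ R := (abs_nonneg _).trans (hyb 0 (i, i))
    linarith
  -- compactness of the box
  have hbox : IsCompact {A : Matrix (Fin n) (Fin n) ℝ | ∀ i j, A i j ∈ Set.Icc (-R) R} := by
    have h2 : {A : Matrix (Fin n) (Fin n) ℝ | ∀ i j, A i j ∈ Set.Icc (-R) R} =
        (Set.univ.pi fun _ : Fin n => Set.univ.pi fun _ : Fin n => Set.Icc (-R) R) := by
      ext A
      constructor
      · intro h i _ j _
        exact h i j
      · intro h i j
        exact h i (Set.mem_univ i) j (Set.mem_univ j)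
    rw [h2]
    exact isCompact_univ_pi fun _ => isCompact_univ_pi fun _ => isCompact_Icc
  have hmem : ∀ k, Z k ∈ {A : Matrix (Fin n) (Fin n) ℝ | ∀ i j, A i j ∈ Set.Icc (-R) R} := by
    intro k i j
    exact Set.mem_Icc.mpr (abs_le.mp (hZb k i j))
  haveI : FirstCountableTopology (Matrix (Fin n) (Fin n) ℝ) :=
    inferInstanceAs (FirstCountableTopology (Fin n → Fin n → ℝ))
  obtain ⟨W, _, φ, hφ, hWt⟩ := hbox.tendsto_subseq hmem
  have hWpsd : W.PosSemidef := by
    have := stmt8_isClosed_psd (n := n)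
    exact this.mem_of_tendsto hWt (Filter.Eventually.of_forall fun k => hZpsd (φ k))
  refine ⟨W, hWpsd, ?_⟩
  have hLcont : Continuous (stmt8_L V) := LinearMap.continuous_of_finiteDimensional _
  have h1 : Filter.Tendsto (fun k => stmt8_L V (Z (φ k))) Filter.atTop (nhds (stmt8_L V W)) :=
    ((hLcont.tendsto W).comp hWt)
  have h2 : Filter.Tendsto (fun k => y (φ k)) Filter.atTop (nhds z) :=
    hz.comp hφ.tendsto_atTop
  have h3 : (fun k => y (φ k)) = fun k => stmt8_L V (Z (φ k)) := funext fun k => hZeq (φ k)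
  rw [h3] at h2
  exact tendsto_nhds_unique h2 h1

end Cone

/-- `K_* = P_V(S^n_+)` is the dual cone of `K = S^n_+ ∩ S^n_V` with respect to the
trace inner product on `S^n_V`: for a symmetric `S` supported on `V`, `S` is the
projection onto `V` of some positive semidefinite matrix iff `tr(SX) ≥ 0` for every
positive semidefinite `X` supported on `V`. -/
theorem stmt_8 {n : ℕ} (V : Set (Fin n × Fin n)) [DecidablePred (· ∈ V)]
    (hVsymm : ∀ i j : Fin n, (i, j) ∈ V → (j, i) ∈ V)
    (hVdiag : ∀ i : Fin n, (i, i) ∈ V)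
    (S : Matrix (Fin n) (Fin n) ℝ) (hSsymm : S.IsSymm)
    (hSsupp : ∀ i j : Fin n, (i, j) ∉ V → S i j = 0) :
    (∃ Z : Matrix (Fin n) (Fin n) ℝ, Z.PosSemidef ∧
        S = fun i j => if (i, j) ∈ V then Z i j else 0) ↔
      (∀ X : Matrix (Fin n) (Fin n) ℝ, X.PosSemidef →
        (∀ i j : Fin n, (i, j) ∉ V → X i j = 0) → 0 ≤ (S * X).trace) := by
  have hS' : ∀ i j : Fin n, S j i = S i j := by
    intro i j
    have := congrFun (congrFun hSsymm i) j
    simpa [Matrix.transpose_apply] using this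
  have hViff : ∀ i j : Fin n, (i, j) ∈ V ↔ (j, i) ∈ V := fun i j => ⟨hVsymm i j, hVsymm j i⟩
  constructor
  · rintro ⟨Z, hZ, rfl⟩ X hX hXsupp
    have htr : ∀ M : Matrix (Fin n) (Fin n) ℝ,
        (∀ i j, M i j = if (i, j) ∈ V then Z i j else 0) →
        (M * X).trace = (Z * X).trace := by
      intro M hM
      simp only [Matrix.trace, Matrix.diag, Matrix.mul_apply]
      refine Finset.sum_congr rfl fun i _ => Finset.sum_congr rfl fun j _ => ?_
      rw [hM i j]
      by_cases h : (i, j) ∈ V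
      · simp [h]
      · rw [hXsupp j i fun hc => h (hVsymm j i hc)]
        simp [h]
    rw [htr _ fun i j => rfl]
    exact stmt8_trace_mul_nonneg hZ hX
  · intro hdual
    set sE : EuclideanSpace ℝ (Fin n × Fin n) :=
      (WithLp.equiv 2 _).symm (fun p : Fin n × Fin n => S p.1 p.2) with hsE
    set P : ProperCone ℝ (EuclideanSpace ℝ (Fin n × Fin n)) :=
      { toSubmodule := (stmt8_C V).toPointedCone ⟨0, Matrix.PosSemidef.zero, (map_zero _).symm⟩,
        isClosed' := stmt8_C_closed V hVdiag } with hP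
    have hbi := ProperCone.innerDual_innerDual P
    have hmem : sE ∈ stmt8_C V := by
      change sE ∈ P
      rw [← hbi, ProperCone.mem_innerDual]
      intro x hx
      rw [SetLike.mem_coe, ProperCone.mem_innerDual] at hx
      -- the symmetrized projection of x onto V
      set Y : Matrix (Fin n) (Fin n) ℝ :=
        fun i j => if (i, j) ∈ V then (x (i, j) + x (j, i)) / 2 else 0 with hY
      have hYsymm : ∀ i j, Y j i = Y i j := by
        intro i j
        simp only [hY]
        by_cases h : (i, j) ∈ V
        · rw [if_pos ((hViff i j).mp h), if_pos h]; ring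
        · rw [if_neg (fun hc => h ((hViff j i).mp hc)), if_neg h]
      have hxC : ∀ Zm : Matrix (Fin n) (Fin n) ℝ, Zm.PosSemidef →
          0 ≤ ∑ p : Fin n × Fin n, (if p ∈ V then Zm p.1 p.2 else 0) * x p := by
        intro Zm hZm
        have h := @hx (stmt8_L V Zm) (show stmt8_L V Zm ∈ stmt8_C V from ⟨Zm, hZm, rfl⟩)
        rwa [stmt8_inner_eq] at h
      have hYpsd : Y.PosSemidef := by
        refine posSemidef_iff_dotProduct_mulVec.mpr ⟨?_, fun v => ?_⟩
        · ext i j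
          rw [conjTranspose_apply, star_trivial]
          exact hYsymm i j
        · have h0 : 0 ≤ ∑ p : Fin n × Fin n, (if p ∈ V then v p.1 * v p.2 else 0) * x p := by
            have := hxC (vecMulVec v v) (stmt8_vecMulVec_psd v)
            simpa [vecMulVec_apply] using this
          have hrw : star v ⬝ᵥ Y *ᵥ v =
              ∑ p : Fin n × Fin n, v p.1 * (Y p.1 p.2 * v p.2) := by
            simp only [star_trivial, dotProduct, mulVec, Finset.mul_sum]
            rw [Fintype.sum_prod_type]
          have hterm : ∀ p : Fin n × Fin n, v p.1 * (Y p.1 p.2 * v p.2)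
              = ((if p ∈ V then v p.1 * v p.2 else 0) * x p
                + (if p ∈ V then v p.1 * v p.2 else 0) * x (p.2, p.1)) / 2 := by
            intro p
            by_cases h : p ∈ V
            · simp only [hY, Prod.mk.eta, if_pos h]
              ring
            · simp [hY, h]
          have hswap : ∑ p : Fin n × Fin n, (if p ∈ V then v p.1 * v p.2 else 0) * x (p.2, p.1)
              = ∑ p : Fin n × Fin n, (if p ∈ V then v p.1 * v p.2 else 0) * x p := by
            calc ∑ p : Fin n × Fin n, (if p ∈ V then v p.1 * v p.2 else 0) * x (p.2, p.1)
                = ∑ p : Fin n × Fin n,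
                    (fun q : Fin n × Fin n => (if (q.2, q.1) ∈ V then v q.2 * v q.1 else 0) * x q)
                      (p.2, p.1) := by
                  refine Finset.sum_congr rfl fun p _ => ?_
                  simp only [Prod.mk.eta]
              _ = ∑ p : Fin n × Fin n, (if (p.2, p.1) ∈ V then v p.2 * v p.1 else 0) * x p :=
                  stmt8_sum_swap (fun q : Fin n × Fin n => (if (q.2, q.1) ∈ V then v q.2 * v q.1 else 0) * x q)
              _ = ∑ p : Fin n × Fin n, (if p ∈ V then v p.1 * v p.2 else 0) * x p := by
                  refine Finset.sum_congr rfl fun p _ => ?_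
                  by_cases h : p ∈ V
                  · rw [if_pos ((hViff p.1 p.2).mp (by simpa using h)), if_pos h, mul_comm (v p.2)]
                  · rw [if_neg (fun hc => h (by simpa using (hViff p.2 p.1).mp hc)), if_neg h]
          rw [hrw]
          calc ∑ p : Fin n × Fin n, v p.1 * (Y p.1 p.2 * v p.2)
              = ∑ p : Fin n × Fin n,
                  ((if p ∈ V then v p.1 * v p.2 else 0) * x p
                    + (if p ∈ V then v p.1 * v p.2 else 0) * x (p.2, p.1)) / 2 :=
                Finset.sum_congr rfl fun p _ => hterm p
            _ = (∑ p : Fin n × Fin n, (if p ∈ V then v p.1 * v p.2 else 0) * x p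
                  + ∑ p : Fin n × Fin n, (if p ∈ V then v p.1 * v p.2 else 0) * x (p.2, p.1)) / 2 := by
                rw [← Finset.sum_add_distrib, ← Finset.sum_div]
            _ = ∑ p : Fin n × Fin n, (if p ∈ V then v p.1 * v p.2 else 0) * x p := by
                rw [hswap, add_self_div_two]
            _ ≥ 0 := h0
      have hYsupp : ∀ i j : Fin n, (i, j) ∉ V → Y i j = 0 := by
        intro i j h
        simp [hY, h]
      have htrace : (S * Y).trace = ∑ p : Fin n × Fin n, x p * S p.1 p.2 := by
        have h1 : (S * Y).trace = ∑ p : Fin n × Fin n, S p.1 p.2 * Y p.2 p.1 := by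
          simp only [Matrix.trace, Matrix.diag, Matrix.mul_apply]
          rw [Fintype.sum_prod_type]
        have h2 : ∀ p : Fin n × Fin n, S p.1 p.2 * Y p.2 p.1
            = (S p.1 p.2 * x p + S p.1 p.2 * x (p.2, p.1)) / 2 := by
          intro p
          rw [hYsymm p.1 p.2]
          by_cases h : p ∈ V
          · simp only [hY, Prod.mk.eta, if_pos h]
            ring
          · have h' : S p.1 p.2 = 0 := hSsupp p.1 p.2 (by simpa using h)
            simp [hY, h, h']
        have h3 : ∑ p : Fin n × Fin n, S p.1 p.2 * x (p.2, p.1)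
            = ∑ p : Fin n × Fin n, S p.1 p.2 * x p := by
          calc ∑ p : Fin n × Fin n, S p.1 p.2 * x (p.2, p.1)
              = ∑ p : Fin n × Fin n,
                  (fun q : Fin n × Fin n => S q.2 q.1 * x q) (p.2, p.1) := by
                refine Finset.sum_congr rfl fun p _ => rfl
            _ = ∑ p : Fin n × Fin n, S p.2 p.1 * x p :=
                stmt8_sum_swap (fun q : Fin n × Fin n => S q.2 q.1 * x q)
            _ = ∑ p : Fin n × Fin n, S p.1 p.2 * x p :=
                Finset.sum_congr rfl fun p _ => by rw [hS' p.1 p.2]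
        rw [h1]
        calc ∑ p : Fin n × Fin n, S p.1 p.2 * Y p.2 p.1
            = ∑ p : Fin n × Fin n, (S p.1 p.2 * x p + S p.1 p.2 * x (p.2, p.1)) / 2 :=
              Finset.sum_congr rfl fun p _ => h2 p
          _ = (∑ p : Fin n × Fin n, S p.1 p.2 * x p
                + ∑ p : Fin n × Fin n, S p.1 p.2 * x (p.2, p.1)) / 2 := by
              rw [← Finset.sum_add_distrib, ← Finset.sum_div]
          _ = ∑ p : Fin n × Fin n, S p.1 p.2 * x p := by rw [h3, add_self_div_two]
          _ = ∑ p : Fin n × Fin n, x p * S p.1 p.2 :=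
              Finset.sum_congr rfl fun p _ => mul_comm _ _
      have hinner : ⟪x, sE⟫ = ∑ p : Fin n × Fin n, x p * S p.1 p.2 := by
        rw [stmt8_inner_eq]
        exact Finset.sum_congr rfl fun p _ => by rw [hsE, WithLp.equiv_symm_apply, WithLp.ofLp_toLp]
      rw [hinner, ← htrace]
      exact hdual Y hYpsd hYsupp
    obtain ⟨Z, hZ, hEq⟩ := hmem
    refine ⟨Z, hZ, ?_⟩
    funext i j
    have h := congrFun (congrArg (WithLp.equiv 2 (Fin n × Fin n → ℝ)) hEq) (i, j)
    simpa [hsE, stmt8_L_apply] using h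
end

section
/- X* is the unique optimal solution of the ℓ₁-regularized Gaussian MLE problem min_{X ≻ 0} tr(CX) - log det(X) + Σ_{i≠j} λ_{ij}|X_{ij}| if and only if X* ≻ 0 and for all i, j: (X*⁻¹)_{ii} = C_{ii}; (X*⁻¹)_{ij} = C_{ij} + λ_{ij} sign(X*_{ij}) whenever X*_{ij} ≠ 0 and i ≠ j; and C_{ij} - λ_{ij} ≤ (X*⁻¹)_{ij} ≤ C_{ij} + λ_{ij} whenever X*_{ij} = 0 and i ≠ j. -/
open Matrix Polynomial

set_option maxHeartbeats 1600000

section GlassoAux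

variable {n : ℕ}

open scoped MatrixOrder

private lemma aux_log_one_add_ge {u : ℝ} (h1 : -(1/2 : ℝ) ≤ u) :
    u - 2 * u ^ 2 ≤ Real.log (1 + u) := by
  have hpos : (0:ℝ) < 1 + u := by linarith
  have h2 : Real.log (1 + u)⁻¹ ≤ (1 + u)⁻¹ - 1 :=
    Real.log_le_sub_one_of_pos (by positivity)
  rw [Real.log_inv] at h2
  have h4 : (1 + u)⁻¹ ≤ 1 - u + 2 * u ^ 2 := by
    rw [inv_le_iff_one_le_mul₀ hpos]
    nlinarith [sq_nonneg u]
  linarith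

private lemma aux_trace_entries (P Q : Matrix (Fin n) (Fin n) ℝ) :
    (P * Q).trace = ∑ i, ∑ j, P i j * Q j i := by
  simp [Matrix.trace, Matrix.diag, Matrix.mul_apply]

private lemma aux_trace_eq_sum_eig {M : Matrix (Fin n) (Fin n) ℝ} (hM : M.IsHermitian) :
    M.trace = ∑ i, hM.eigenvalues i := by
  conv_lhs => rw [hM.spectral_theorem, Unitary.conjStarAlgAut_apply]
  rw [Matrix.trace_mul_cycle]
  rw [show (star (hM.eigenvectorUnitary : Matrix (Fin n) (Fin n) ℝ)) *
      (hM.eigenvectorUnitary : Matrix (Fin n) (Fin n) ℝ) = 1 from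
    (hM.eigenvectorUnitary).2.1]
  simp [Matrix.trace_diagonal, Function.comp]

private lemma aux_conj_posdef {A B : Matrix (Fin n) (Fin n) ℝ} (hA : A.PosDef)
    (hB : IsUnit B.det) : (Bᵀ * A * B).PosDef := by
  refine Matrix.PosDef.of_dotProduct_mulVec_pos ?_ (fun x hx => ?_)
  · have h := hA.isHermitian
    unfold Matrix.IsHermitian at *
    simp only [conjTranspose_mul, conjTranspose_eq_transpose_of_trivial,
      transpose_transpose] at *
    simp [Matrix.transpose_mul, h, Matrix.mul_assoc]
  · have hBx : B *ᵥ x ≠ 0 := by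
      intro hcon
      exact hx (Matrix.mulVec_injective_iff_isUnit.2 (isUnit_iff_isUnit_det _ |>.2 hB)
        (by simpa using hcon))
    have h := hA.dotProduct_mulVec_pos hBx
    simp only [star_trivial] at h ⊢
    rw [Matrix.mul_assoc, ← Matrix.mulVec_mulVec, dotProduct_mulVec,
      Matrix.vecMul_transpose, ← Matrix.mulVec_mulVec]
    exact h
private lemma aux_logdet_strict {A B : Matrix (Fin n) (Fin n) ℝ} (hA : A.PosDef) (hB : B.PosDef)
    (hne : B ≠ A) : Real.log B.det - Real.log A.det < (A⁻¹ * B).trace - n := by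
  set S := CFC.sqrt A with hSdef
  have hSps : S.PosSemidef := (CFC.sqrt_nonneg A).posSemidef
  have hSS : S * S = A := CFC.sqrt_mul_sqrt_self A hA.posSemidef.nonneg
  have hSsymm : Sᵀ = S := by
    have := hSps.isHermitian
    rwa [Matrix.IsHermitian, conjTranspose_eq_transpose_of_trivial] at this
  have hdA : (0:ℝ) < A.det := hA.det_pos
  have hdS : S.det ≠ 0 := fun h => by
    rw [← hSS, det_mul, h, mul_zero] at hdA; exact lt_irrefl _ hdA
  have hdSi : (S⁻¹).det = (S.det)⁻¹ := by
    rw [Matrix.det_nonsing_inv, Ring.inverse_eq_inv']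
  have hSinvT : (S⁻¹)ᵀ = S⁻¹ := by rw [Matrix.transpose_nonsing_inv, hSsymm]
  set M := S⁻¹ * B * S⁻¹ with hMdef
  have hM : M.PosDef := by
    have h := aux_conj_posdef (B := S⁻¹) hB
      (by rw [hdSi]; exact (inv_ne_zero hdS).isUnit)
    rwa [hSinvT] at h
  have hMh : M.IsHermitian := hM.isHermitian
  set μ := hMh.eigenvalues with hμdef
  have hμpos : ∀ i, 0 < μ i := hM.eigenvalues_pos
  have hdetM : M.det = B.det / A.det := by
    rw [hMdef, det_mul, det_mul, hdSi, ← hSS, det_mul]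
    field_simp
  have htr : (A⁻¹ * B).trace = M.trace := by
    have h1 : (S⁻¹ * B * S⁻¹).trace = (S⁻¹ * S⁻¹ * B).trace :=
      Matrix.trace_mul_cycle _ _ _
    rw [← hSS, Matrix.mul_inv_rev, hMdef, h1]
  -- B = S * M * S would give contradiction if all eigenvalues are 1
  have hBSMS : S * M * S = B := by
    rw [hMdef, ← Matrix.mul_assoc, ← Matrix.mul_assoc,
      Matrix.mul_nonsing_inv _ hdS.isUnit, Matrix.one_mul, Matrix.mul_assoc,
      Matrix.nonsing_inv_mul _ hdS.isUnit, Matrix.mul_one]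
  have hex : ∃ i, μ i ≠ 1 := by
    by_contra h
    push_neg at h
    have hMone : M = 1 := by
      have hdiag : Matrix.diagonal (RCLike.ofReal ∘ μ) = (1 : Matrix (Fin n) (Fin n) ℝ) := by
        rw [show RCLike.ofReal ∘ μ = fun _ => (1:ℝ) by funext i; simp [h i]]
        exact Matrix.diagonal_one
      have := hMh.spectral_theorem
      rw [hdiag, Unitary.conjStarAlgAut_apply] at this
      rw [this, Matrix.mul_one]
      exact (hMh.eigenvectorUnitary).2.2
    rw [hMone, Matrix.mul_one, hSS] at hBSMS
    exact hne hBSMS.symm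
  obtain ⟨i0, hi0⟩ := hex
  have hsum : ∑ i, Real.log (μ i) < ∑ i, (μ i - 1) := by
    refine Finset.sum_lt_sum (fun i _ => Real.log_le_sub_one_of_pos (hμpos i))
      ⟨i0, Finset.mem_univ _, Real.log_lt_sub_one_of_pos (hμpos i0) hi0⟩
  have hlhs : Real.log B.det - Real.log A.det = ∑ i, Real.log (μ i) := by
    rw [← Real.log_div hB.det_pos.ne' hdA.ne', ← hdetM]
    rw [show M.det = ∏ i, μ i by
      have := hMh.det_eq_prod_eigenvalues
      simpa using this]
    exact Real.log_prod (fun i _ => (hμpos i).ne')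
  have hrhs : ∑ i, (μ i - 1) = (A⁻¹ * B).trace - n := by
    rw [Finset.sum_sub_distrib, htr, aux_trace_eq_sum_eig hMh]
    simp
    rfl
  rw [hlhs, ← hrhs]
  exact hsum
private lemma aux_quadform_bound (B : Matrix (Fin n) (Fin n) ℝ) (x : Fin n → ℝ) :
    |x ⬝ᵥ B *ᵥ x| ≤ (∑ i, ∑ j, |B i j|) * (x ⬝ᵥ x) := by
  have hS : ∀ i, x i ^ 2 ≤ x ⬝ᵥ x := by
    intro i
    rw [dotProduct]
    simpa [sq] using Finset.single_le_sum (f := fun k => x k * x k)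
      (fun k _ => mul_self_nonneg (x k)) (Finset.mem_univ i)
  have hxx : ∀ i j, |x i * x j| ≤ x ⬝ᵥ x := by
    intro i j
    rw [abs_mul]
    nlinarith [hS i, hS j, sq_abs (x i), sq_abs (x j), abs_nonneg (x i), abs_nonneg (x j),
      sq_nonneg (|x i| - |x j|)]
  calc |x ⬝ᵥ B *ᵥ x| = |∑ i, ∑ j, B i j * (x i * x j)| := by
        congr 1
        simp only [dotProduct, Matrix.mulVec, Finset.mul_sum]
        exact Finset.sum_congr rfl fun i _ => Finset.sum_congr rfl fun j _ => by ring
    _ ≤ ∑ i, ∑ j, |B i j * (x i * x j)| := by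
        refine (Finset.abs_sum_le_sum_abs _ _).trans ?_
        exact Finset.sum_le_sum fun i _ => Finset.abs_sum_le_sum_abs _ _
    _ ≤ ∑ i, ∑ j, |B i j| * (x ⬝ᵥ x) := by
        refine Finset.sum_le_sum fun i _ => Finset.sum_le_sum fun j _ => ?_
        rw [abs_mul]
        exact mul_le_mul_of_nonneg_left (hxx i j) (abs_nonneg _)
    _ = (∑ i, ∑ j, |B i j|) * (x ⬝ᵥ x) := by rw [Finset.sum_mul]; simp [Finset.sum_mul]

private lemma aux_posdef_perturb {Xs : Matrix (Fin n) (Fin n) ℝ} (hXs : Xs.PosDef)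
    (E : Matrix (Fin n) (Fin n) ℝ) (hE : E.IsSymm) :
    ∃ δ > 0, ∀ t : ℝ, |t| < δ → (Xs + t • E).PosDef := by
  set S := CFC.sqrt Xs with hSdef
  have hSps : S.PosSemidef := (CFC.sqrt_nonneg Xs).posSemidef
  have hSS : S * S = Xs := CFC.sqrt_mul_sqrt_self Xs hXs.posSemidef.nonneg
  have hSsymm : Sᵀ = S := by
    have := hSps.isHermitian
    rwa [Matrix.IsHermitian, conjTranspose_eq_transpose_of_trivial] at this
  have hdXs : (0:ℝ) < Xs.det := hXs.det_pos
  have hdS : S.det ≠ 0 := fun h => by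
    rw [← hSS, det_mul, h, mul_zero] at hdXs; exact lt_irrefl _ hdXs
  have hSinvT : (S⁻¹)ᵀ = S⁻¹ := by rw [Matrix.transpose_nonsing_inv, hSsymm]
  set B := S⁻¹ * E * S⁻¹ with hBdef
  have hBsymm : Bᵀ = B := by
    rw [hBdef, Matrix.transpose_mul, Matrix.transpose_mul, hSinvT,
      show Eᵀ = E from hE, Matrix.mul_assoc]
  set K := (∑ i, ∑ j, |B i j|) + 1 with hKdef
  have hK1 : (1:ℝ) ≤ K := by
    rw [hKdef]
    have : (0:ℝ) ≤ ∑ i, ∑ j, |B i j| :=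
      Finset.sum_nonneg fun i _ => Finset.sum_nonneg fun j _ => abs_nonneg _
    linarith
  have hKpos : (0:ℝ) < K := lt_of_lt_of_le one_pos hK1
  refine ⟨1 / K, by positivity, fun t ht => ?_⟩
  -- 1 + t • B is PosDef
  have h1B : (1 + t • B : Matrix (Fin n) (Fin n) ℝ).PosDef := by
    refine Matrix.PosDef.of_dotProduct_mulVec_pos ?_ (fun x hx => ?_)
    · rw [Matrix.IsHermitian, conjTranspose_eq_transpose_of_trivial,
        Matrix.transpose_add, Matrix.transpose_one, Matrix.transpose_smul, hBsymm]
    · have hxpos : 0 < x ⬝ᵥ x := by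
        have hne : ∃ i, x i ≠ 0 := Function.ne_iff.mp hx
        obtain ⟨i, hi⟩ := hne
        rw [dotProduct]
        refine Finset.sum_pos' (fun k _ => mul_self_nonneg (x k))
          ⟨i, Finset.mem_univ _, mul_self_pos.mpr hi⟩
      have hb := aux_quadform_bound B x
      have h1 : x ⬝ᵥ (1 + t • B) *ᵥ x = x ⬝ᵥ x + t * (x ⬝ᵥ B *ᵥ x) := by
        rw [Matrix.add_mulVec, dotProduct_add, Matrix.one_mulVec,
          Matrix.smul_mulVec, dotProduct_smul, smul_eq_mul]
      rw [star_trivial, h1]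
      have h2 : |t * (x ⬝ᵥ B *ᵥ x)| ≤ |t| * ((K - 1) * (x ⬝ᵥ x)) := by
        rw [abs_mul]
        exact mul_le_mul_of_nonneg_left (by rw [hKdef]; simpa using hb) (abs_nonneg t)
      have h3 : |t| * ((K - 1) * (x ⬝ᵥ x)) ≤ (1/K) * ((K - 1) * (x ⬝ᵥ x)) :=
        mul_le_mul_of_nonneg_right ht.le
          (mul_nonneg (by linarith) hxpos.le)
      have h4 : (1/K) * ((K - 1) * (x ⬝ᵥ x)) < x ⬝ᵥ x := by
        have heq : (1/K) * ((K - 1) * (x ⬝ᵥ x)) = (1 - 1/K) * (x ⬝ᵥ x) := by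
          field_simp
        rw [heq]
        have h5 : (0:ℝ) < 1/K := by positivity
        nlinarith
      have := abs_lt.mp (lt_of_le_of_lt (h2.trans h3) h4)
      linarith [this.1, this.2]
  have hconj : Sᵀ * (1 + t • B) * S = Xs + t • E := by
    rw [hSsymm, Matrix.mul_add, Matrix.add_mul, Matrix.mul_one, hSS]
    congr 1
    rw [Matrix.mul_smul, Matrix.smul_mul]
    congr 1
    rw [hBdef, ← Matrix.mul_assoc, ← Matrix.mul_assoc,
      Matrix.mul_nonsing_inv _ hdS.isUnit, Matrix.one_mul, Matrix.mul_assoc,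
      Matrix.nonsing_inv_mul _ hdS.isUnit, Matrix.mul_one]
  rw [← hconj]
  exact aux_conj_posdef h1B hdS.isUnit
private lemma aux_poly_eval_bound (p : ℝ[X]) : ∃ Q : ℝ, 0 < Q ∧ ∀ t : ℝ, |t| ≤ 1 → |p.eval t| ≤ Q := by
  refine ⟨(∑ k ∈ Finset.range (p.natDegree + 1), |p.coeff k|) + 1, ?_, fun t ht => ?_⟩
  · have : (0:ℝ) ≤ ∑ k ∈ Finset.range (p.natDegree + 1), |p.coeff k| :=
      Finset.sum_nonneg fun k _ => abs_nonneg _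
    linarith
  · rw [Polynomial.eval_eq_sum_range]
    refine le_trans (Finset.abs_sum_le_sum_abs _ _) ?_
    have : ∀ k ∈ Finset.range (p.natDegree + 1), |p.coeff k * t ^ k| ≤ |p.coeff k| := by
      intro k _
      rw [abs_mul]
      calc |p.coeff k| * |t ^ k| ≤ |p.coeff k| * 1 := by
            refine mul_le_mul_of_nonneg_left ?_ (abs_nonneg _)
            rw [abs_pow]
            exact pow_le_one₀ (abs_nonneg t) ht
        _ = |p.coeff k| := mul_one _
    linarith [Finset.sum_le_sum this]

private lemma aux_logdet_lb {Xs : Matrix (Fin n) (Fin n) ℝ} (hXs : Xs.PosDef)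
    (E : Matrix (Fin n) (Fin n) ℝ) :
    ∃ K > (0:ℝ), ∃ δ > (0:ℝ), ∀ t : ℝ, |t| < δ →
      Real.log Xs.det + t * (Xs⁻¹ * E).trace - K * t ^ 2 ≤ Real.log (Xs + t • E).det := by
  set N := Xs⁻¹ * E with hNdef
  set p := (Matrix.det (1 + (X : ℝ[X]) • N.map C)).divX.divX with hpdef
  obtain ⟨Q, hQpos, hQ⟩ := aux_poly_eval_bound p
  set a := N.trace with hadef
  set c := |a| + Q with hcdef
  have hcpos : 0 < c := by have := abs_nonneg a; rw [hcdef]; linarith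
  refine ⟨Q + 2 * c ^ 2, by positivity, min 1 (1 / (2 * c)), by positivity, fun t ht => ?_⟩
  have ht1 : |t| ≤ 1 := le_of_lt (lt_of_lt_of_le ht (min_le_left _ _))
  have ht2 : |t| ≤ 1 / (2 * c) := le_of_lt (lt_of_lt_of_le ht (min_le_right _ _))
  have hdet : (Xs + t • E).det = Xs.det * (1 + (a * t + p.eval t * t ^ 2)) := by
    have hfact : Xs + t • E = Xs * (1 + t • N) := by
      rw [Matrix.mul_add, Matrix.mul_one, Matrix.mul_smul, hNdef, ← Matrix.mul_assoc,
        Matrix.mul_nonsing_inv _ hXs.det_pos.ne'.isUnit, Matrix.one_mul]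
    rw [hfact, det_mul, Matrix.det_one_add_smul t N]
    ring_nf
    rw [hadef, hpdef]; ring
  set u := a * t + p.eval t * t ^ 2 with hudef
  have hu : |u| ≤ c * |t| := by
    have h1 : |u| ≤ |a| * |t| + |p.eval t| * t ^ 2 := by
      refine le_trans (abs_add_le _ _) ?_
      rw [abs_mul, abs_mul, abs_pow, sq_abs]
    have h2 : |p.eval t| * t ^ 2 ≤ Q * |t| := by
      have := hQ t ht1
      have ht2' : t ^ 2 ≤ |t| := by
        rw [← sq_abs]
        nlinarith [abs_nonneg t]
      nlinarith [abs_nonneg (p.eval t), sq_nonneg t, abs_nonneg t]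
    rw [hcdef]
    nlinarith [abs_nonneg t]
  have huhalf : |u| ≤ 1/2 := by
    calc |u| ≤ c * |t| := hu
      _ ≤ c * (1 / (2 * c)) := mul_le_mul_of_nonneg_left ht2 hcpos.le
      _ = 1/2 := by field_simp
  have hupos : (0:ℝ) < 1 + u := by
    have := abs_le.mp huhalf
    linarith [this.1]
  have hlog : Real.log (Xs + t • E).det = Real.log Xs.det + Real.log (1 + u) := by
    rw [hdet, Real.log_mul hXs.det_pos.ne' hupos.ne']
  rw [hlog]
  have hlb : u - 2 * u ^ 2 ≤ Real.log (1 + u) := by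
    refine aux_log_one_add_ge ?_
    have := abs_le.mp huhalf
    linarith [this.1]
  have hu2 : u ^ 2 ≤ c ^ 2 * t ^ 2 := by
    have h := hu
    nlinarith [abs_nonneg u, abs_nonneg t, sq_abs u, sq_abs t]
  have hfinal : t * a - (Q + 2 * c ^ 2) * t ^ 2 ≤ u - 2 * u ^ 2 := by
    rw [hudef]
    have hq : -(Q * t ^ 2) ≤ p.eval t * t ^ 2 := by
      have := (abs_le.mp (hQ t ht1)).1
      nlinarith [sq_nonneg t]
    nlinarith
  linarith
private lemma aux_subgrad {g lamv xs x : ℝ} (hgb : |g| ≤ lamv)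
    (hgx : g * xs = lamv * |xs|) :
    0 ≤ -(g * (x - xs)) + lamv * (|x| - |xs|) := by
  have h1 : g * x ≤ lamv * |x| :=
    calc g * x ≤ |g * x| := le_abs_self _
      _ = |g| * |x| := abs_mul _ _
      _ ≤ lamv * |x| := mul_le_mul_of_nonneg_right hgb (abs_nonneg _)
  nlinarith [h1, hgx]

private lemma aux_g_facts {C : Matrix (Fin n) (Fin n) ℝ} {lam : Fin n → Fin n → ℝ}
    {Xs : Matrix (Fin n) (Fin n) ℝ}
    (h2 : ∀ i j : Fin n, i ≠ j → Xs i j ≠ 0 →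
      Xs⁻¹ i j = C i j + lam i j * Real.sign (Xs i j))
    (h3 : ∀ i j : Fin n, i ≠ j → Xs i j = 0 →
      C i j - lam i j ≤ Xs⁻¹ i j ∧ Xs⁻¹ i j ≤ C i j + lam i j)
    (k l : Fin n) (hkl : k ≠ l) (hlam : 0 < lam k l) :
    |Xs⁻¹ k l - C k l| ≤ lam k l ∧
      (Xs⁻¹ k l - C k l) * Xs k l = lam k l * |Xs k l| := by
  by_cases hx : Xs k l = 0
  · obtain ⟨ha, hb⟩ := h3 k l hkl hx
    refine ⟨by rw [abs_le]; constructor <;> linarith, by rw [hx]; simp⟩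
  · have heq := h2 k l hkl hx
    rcases lt_or_gt_of_ne hx with hneg | hpos
    · rw [Real.sign_of_neg hneg] at heq
      refine ⟨?_, ?_⟩
      · rw [heq, show C k l + lam k l * (-1) - C k l = -(lam k l) by ring, abs_neg,
          abs_of_pos hlam]
      · rw [heq, abs_of_neg hneg]; ring
    · rw [Real.sign_of_pos hpos] at heq
      refine ⟨?_, ?_⟩
      · rw [heq, show C k l + lam k l * 1 - C k l = lam k l by ring, abs_of_pos hlam]
      · rw [heq, abs_of_pos hpos]; ring

private lemma aux_backward {C : Matrix (Fin n) (Fin n) ℝ} (hC : C.IsSymm)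
    {lam : Fin n → Fin n → ℝ} (hlampos : ∀ i j, i ≠ j → 0 < lam i j)
    {Xs : Matrix (Fin n) (Fin n) ℝ} (hXssymm : Xs.IsSymm) (hXs : Xs.PosDef)
    (h1 : ∀ i : Fin n, Xs⁻¹ i i = C i i)
    (h2 : ∀ i j : Fin n, i ≠ j → Xs i j ≠ 0 →
      Xs⁻¹ i j = C i j + lam i j * Real.sign (Xs i j))
    (h3 : ∀ i j : Fin n, i ≠ j → Xs i j = 0 →
      C i j - lam i j ≤ Xs⁻¹ i j ∧ Xs⁻¹ i j ≤ C i j + lam i j)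
    (X : Matrix (Fin n) (Fin n) ℝ) (hX : X.PosDef) (hXsymm : X.IsSymm) (hne : X ≠ Xs) :
    (C * Xs).trace - Real.log Xs.det
        + ∑ i, ∑ j, (if i ≠ j then lam i j * |Xs i j| else 0)
      < (C * X).trace - Real.log X.det
        + ∑ i, ∑ j, (if i ≠ j then lam i j * |X i j| else 0) := by
  have hklein := aux_logdet_strict hXs hX hne
  have htrinv : (Xs⁻¹ * Xs).trace = n := by
    rw [Matrix.nonsing_inv_mul _ hXs.det_pos.ne'.isUnit, Matrix.trace_one]
    simp
  -- per-entry nonnegativity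
  have hterm : ∀ k l : Fin n,
      0 ≤ (C k l * X l k - C k l * Xs l k - Xs⁻¹ k l * X l k + Xs⁻¹ k l * Xs l k)
        + ((if k ≠ l then lam k l * |X k l| else 0)
            - (if k ≠ l then lam k l * |Xs k l| else 0)) := by
    intro k l
    by_cases hkl : k = l
    · subst hkl
      simp only [ne_eq, not_true_eq_false, if_false]
      rw [h1 k]
      ring_nf
      exact le_refl 0
    · obtain ⟨hgb, hgx⟩ := aux_g_facts h2 h3 k l hkl (hlampos k l hkl)
      simp only [if_pos hkl]
      have hXlk : X l k = X k l := by
        have := hXsymm; rw [Matrix.IsSymm] at this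
        conv_lhs => rw [← this]
        rfl
      have hXslk : Xs l k = Xs k l := by
        have := hXssymm; rw [Matrix.IsSymm] at this
        conv_lhs => rw [← this]
        rfl
      have := aux_subgrad (x := X k l) hgb hgx
      rw [hXlk, hXslk]
      nlinarith [this]
  have hsum := Finset.sum_nonneg (fun k (_ : k ∈ Finset.univ) =>
    Finset.sum_nonneg (fun l (_ : l ∈ Finset.univ) => hterm k l))
  -- split the big sum
  have hsplit : ∑ k, ∑ l, ((C k l * X l k - C k l * Xs l k - Xs⁻¹ k l * X l k
        + Xs⁻¹ k l * Xs l k)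
        + ((if k ≠ l then lam k l * |X k l| else 0)
            - (if k ≠ l then lam k l * |Xs k l| else 0)))
      = ((C * X).trace - (C * Xs).trace - (Xs⁻¹ * X).trace + (Xs⁻¹ * Xs).trace)
        + ((∑ k, ∑ l, (if k ≠ l then lam k l * |X k l| else 0))
            - ∑ k, ∑ l, (if k ≠ l then lam k l * |Xs k l| else 0)) := by
    rw [aux_trace_entries, aux_trace_entries, aux_trace_entries, aux_trace_entries]
    simp only [Finset.sum_add_distrib, Finset.sum_sub_distrib]
  rw [hsplit] at hsum
  rw [htrinv] at hsum
  linarith [hklein, hsum]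
private lemma aux_trace_mul_std (P : Matrix (Fin n) (Fin n) ℝ) (i j : Fin n) :
    (P * Matrix.single i j (1:ℝ)).trace = P j i := by
  rw [aux_trace_entries]
  rw [Finset.sum_eq_single j]
  · rw [Finset.sum_eq_single i]
    · simp
    · intro l _ hl
      rw [Matrix.single_apply_of_ne _ _ _ _ _ (by tauto), mul_zero]
    · simp
  · intro k _ hk
    refine Finset.sum_eq_zero fun l _ => ?_
    rw [Matrix.single_apply_of_ne _ _ _ _ _ (by tauto), mul_zero]
  · simp

private lemma aux_pen_diag (lam : Fin n → Fin n → ℝ) (Xs : Matrix (Fin n) (Fin n) ℝ)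
    (p : Fin n) (t : ℝ) :
    ∑ i, ∑ j, (if i ≠ j then
        lam i j * |(Xs + t • Matrix.single p p (1:ℝ)) i j| else 0)
      = ∑ i, ∑ j, (if i ≠ j then lam i j * |Xs i j| else 0) := by
  refine Finset.sum_congr rfl fun i _ => Finset.sum_congr rfl fun j _ => ?_
  by_cases hij : i ≠ j
  · have hE : Matrix.single p p t i j = 0 :=
      Matrix.single_apply_of_ne _ _ _ _ _ (by rintro ⟨rfl, rfl⟩; exact hij rfl)
    simp [hij, Matrix.add_apply, Matrix.smul_single, hE]
  · simp [hij]

private lemma aux_pen_offdiag (lam : Fin n → Fin n → ℝ) (Xs : Matrix (Fin n) (Fin n) ℝ)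
    (p q : Fin n) (hpq : p ≠ q) (t : ℝ) :
    ∑ i, ∑ j, (if i ≠ j then
        lam i j * |(Xs + t • (Matrix.single p q (1:ℝ) + Matrix.single q p (1:ℝ))) i j| else 0)
      = (∑ i, ∑ j, (if i ≠ j then lam i j * |Xs i j| else 0))
        + lam p q * (|Xs p q + t| - |Xs p q|) + lam q p * (|Xs q p + t| - |Xs q p|) := by
  have key : ∀ i j : Fin n,
      (if i ≠ j then
        lam i j * |(Xs + t • (Matrix.single p q (1:ℝ) + Matrix.single q p (1:ℝ))) i j| else 0)
      = (if i ≠ j then lam i j * |Xs i j| else 0)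
        + ((if i = p ∧ j = q then lam p q * (|Xs p q + t| - |Xs p q|) else 0)
          + (if i = q ∧ j = p then lam q p * (|Xs q p + t| - |Xs q p|) else 0)) := by
    intro i j
    by_cases h1 : i = p ∧ j = q
    · obtain ⟨rfl, rfl⟩ := h1
      have hent : (Xs + t • (Matrix.single i j (1:ℝ) + Matrix.single j i (1:ℝ))) i j
          = Xs i j + t := by
        have h0 : Matrix.single j i (t:ℝ) i j = 0 :=
          Matrix.single_apply_of_row_ne (Ne.symm hpq) _ _ _
        simp [Matrix.add_apply, smul_add, Matrix.smul_single, h0]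
      have hne : ¬(i = j ∧ j = i) := fun h => hpq h.1
      simp [hent, hpq, hne]
      ring
    · by_cases h2 : i = q ∧ j = p
      · obtain ⟨rfl, rfl⟩ := h2
        have hqp : i ≠ j := Ne.symm hpq
        have hent : (Xs + t • (Matrix.single j i (1:ℝ) + Matrix.single i j (1:ℝ))) i j
            = Xs i j + t := by
          have h0 : Matrix.single j i (t:ℝ) i j = 0 :=
            Matrix.single_apply_of_row_ne hqp.symm _ _ _
          simp [Matrix.add_apply, smul_add, Matrix.smul_single, h0]
        have hne : ¬(i = j ∧ j = i) := fun h => hqp h.1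
        simp [hent, hqp, hne]
        ring
      · have hent : (Xs + t • (Matrix.single p q (1:ℝ) + Matrix.single q p (1:ℝ))) i j
            = Xs i j := by
          rw [Matrix.add_apply, Matrix.smul_apply, Matrix.add_apply,
            Matrix.single_apply_of_ne _ _ _ _ _ (by tauto),
            Matrix.single_apply_of_ne _ _ _ _ _ (by tauto)]
          simp
        rw [hent, if_neg h1, if_neg h2]
        ring
  have expand : ∀ (F G : Fin n → Fin n → ℝ),
      (∑ i, ∑ j, (F i j + G i j)) = (∑ i, ∑ j, F i j) + (∑ i, ∑ j, G i j) := by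
    intro F G
    rw [← Finset.sum_add_distrib]
    exact Finset.sum_congr rfl fun i _ => Finset.sum_add_distrib
  have hs1 : (∑ i : Fin n, ∑ j : Fin n,
      (if i = p ∧ j = q then lam p q * (|Xs p q + t| - |Xs p q|) else 0))
      = lam p q * (|Xs p q + t| - |Xs p q|) := by
    simp [ite_and, Finset.sum_ite_eq, Finset.sum_ite_eq']
  have hs2 : (∑ i : Fin n, ∑ j : Fin n,
      (if i = q ∧ j = p then lam q p * (|Xs q p + t| - |Xs q p|) else 0))
      = lam q p * (|Xs q p + t| - |Xs q p|) := by
    simp [ite_and, Finset.sum_ite_eq, Finset.sum_ite_eq']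
  simp only [key]
  rw [expand, expand, hs1, hs2]
  ring
private lemma aux_descent {Cm : Matrix (Fin n) (Fin n) ℝ} {lam : Fin n → Fin n → ℝ}
    {Xs : Matrix (Fin n) (Fin n) ℝ} (hXs : Xs.PosDef) (hXssymm : Xs.IsSymm)
    (hmin : ∀ X : Matrix (Fin n) (Fin n) ℝ, X.PosDef → X.IsSymm → X ≠ Xs →
        (Cm * Xs).trace - Real.log Xs.det
            + ∑ i, ∑ j, (if i ≠ j then lam i j * |Xs i j| else 0)
          < (Cm * X).trace - Real.log X.det
            + ∑ i, ∑ j, (if i ≠ j then lam i j * |X i j| else 0))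
    (E : Matrix (Fin n) (Fin n) ℝ) (hE : E.IsSymm) (hEne : E ≠ 0)
    (pb δ₀ : ℝ) (hδ₀ : 0 < δ₀)
    (hpen : ∀ t : ℝ, 0 < t → t < δ₀ →
      (∑ i, ∑ j, (if i ≠ j then lam i j * |(Xs + t • E) i j| else 0))
        ≤ (∑ i, ∑ j, (if i ≠ j then lam i j * |Xs i j| else 0)) + t * pb)
    (hslope : (Cm * E).trace - (Xs⁻¹ * E).trace + pb < 0) : False := by
  obtain ⟨K, hK, δ₁, hδ₁, hlb⟩ := aux_logdet_lb hXs E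
  obtain ⟨δ₂, hδ₂, hpd⟩ := aux_posdef_perturb hXs E hE
  have hspos : 0 < -((Cm * E).trace - (Xs⁻¹ * E).trace + pb) := by linarith
  set t := min (min δ₀ δ₁) (min δ₂ (-((Cm * E).trace - (Xs⁻¹ * E).trace + pb) / K)) / 2
    with htdef
  have htpos : 0 < t := by
    rw [htdef]
    have h1 : 0 < -((Cm * E).trace - (Xs⁻¹ * E).trace + pb) / K := by positivity
    positivity
  have ht0 : t < δ₀ := by
    rw [htdef]
    have := min_le_left (min δ₀ δ₁) (min δ₂ (-((Cm * E).trace - (Xs⁻¹ * E).trace + pb) / K))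
    have := min_le_left δ₀ δ₁
    linarith
  have ht1 : |t| < δ₁ := by
    rw [abs_of_pos htpos, htdef]
    have := min_le_left (min δ₀ δ₁) (min δ₂ (-((Cm * E).trace - (Xs⁻¹ * E).trace + pb) / K))
    have := min_le_right δ₀ δ₁
    linarith
  have ht2 : |t| < δ₂ := by
    rw [abs_of_pos htpos, htdef]
    have := min_le_right (min δ₀ δ₁) (min δ₂ (-((Cm * E).trace - (Xs⁻¹ * E).trace + pb) / K))
    have := min_le_left δ₂ (-((Cm * E).trace - (Xs⁻¹ * E).trace + pb) / K)
    linarith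
  have htK : K * t < -((Cm * E).trace - (Xs⁻¹ * E).trace + pb) := by
    have h1 : t < -((Cm * E).trace - (Xs⁻¹ * E).trace + pb) / K := by
      rw [htdef]
      have := min_le_right (min δ₀ δ₁) (min δ₂ (-((Cm * E).trace - (Xs⁻¹ * E).trace + pb) / K))
      have := min_le_right δ₂ (-((Cm * E).trace - (Xs⁻¹ * E).trace + pb) / K)
      have hq : 0 < -((Cm * E).trace - (Xs⁻¹ * E).trace + pb) / K := by positivity
      linarith
    calc K * t < K * (-((Cm * E).trace - (Xs⁻¹ * E).trace + pb) / K) :=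
          mul_lt_mul_of_pos_left h1 hK
      _ = -((Cm * E).trace - (Xs⁻¹ * E).trace + pb) := by field_simp
  set X := Xs + t • E with hXdef
  have hXpd : X.PosDef := hpd t ht2
  have hXsymm : X.IsSymm := by
    rw [Matrix.IsSymm, hXdef, Matrix.transpose_add, Matrix.transpose_smul, hXssymm, hE]
  have hXne : X ≠ Xs := by
    intro h
    apply hEne
    ext i j
    have hentry : X i j = Xs i j := by rw [h]
    rw [hXdef, Matrix.add_apply, Matrix.smul_apply, smul_eq_mul] at hentry
    have : t * E i j = 0 := by linarith
    rcases mul_eq_zero.mp this with h' | h'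
    · exact absurd h' htpos.ne'
    · simpa using h'
  have hobj := hmin X hXpd hXsymm hXne
  have htrace : (Cm * X).trace = (Cm * Xs).trace + t * (Cm * E).trace := by
    rw [hXdef, Matrix.mul_add, Matrix.mul_smul, Matrix.trace_add, Matrix.trace_smul,
      smul_eq_mul]
  have hlog := hlb t ht1
  have hpen' := hpen t htpos ht0
  have hsq : K * t ^ 2 < -((Cm * E).trace - (Xs⁻¹ * E).trace + pb) * t := by
    have := mul_lt_mul_of_pos_right htK htpos
    calc K * t ^ 2 = K * t * t := by ring
      _ < -((Cm * E).trace - (Xs⁻¹ * E).trace + pb) * t := this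
  rw [htrace] at hobj
  rw [← hXdef] at hlog hpen'
  nlinarith [hobj, hlog, hpen', hsq]

private lemma aux_std_transpose (i j : Fin n) (c : ℝ) :
    (Matrix.single i j c)ᵀ = Matrix.single j i c := by
  ext a b
  simp [Matrix.transpose_apply, Matrix.single, and_comm]

private lemma aux_symm_entry {A : Matrix (Fin n) (Fin n) ℝ} (hA : Aᵀ = A) (i j : Fin n) :
    A j i = A i j := by
  conv_lhs => rw [← hA]
  rw [Matrix.transpose_apply]

private lemma aux_trace_mul_stdc (P : Matrix (Fin n) (Fin n) ℝ) (i j : Fin n) (c : ℝ) :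
    (P * Matrix.single i j c).trace = c * P j i := by
  rw [show Matrix.single i j c = c • Matrix.single i j (1:ℝ) by
      rw [Matrix.smul_single, smul_eq_mul, mul_one],
    Matrix.mul_smul, Matrix.trace_smul, smul_eq_mul, aux_trace_mul_std]

private lemma aux_pen_diagc (lam : Fin n → Fin n → ℝ) (Xs : Matrix (Fin n) (Fin n) ℝ)
    (p : Fin n) (c t : ℝ) :
    ∑ i, ∑ j, (if i ≠ j then
        lam i j * |(Xs + t • Matrix.single p p c) i j| else 0)
      = ∑ i, ∑ j, (if i ≠ j then lam i j * |Xs i j| else 0) := by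
  rw [show t • Matrix.single p p c = (t*c) • Matrix.single p p (1:ℝ) by
      rw [Matrix.smul_single, Matrix.smul_single, smul_eq_mul, smul_eq_mul,
        mul_one]]
  exact aux_pen_diag lam Xs p (t*c)

private lemma aux_offdiag_descent {Cm : Matrix (Fin n) (Fin n) ℝ} {lam : Fin n → Fin n → ℝ}
    {Xs : Matrix (Fin n) (Fin n) ℝ} (hCsymm : Cm.IsSymm) (hlamsymm : ∀ i j, lam i j = lam j i)
    (hXs : Xs.PosDef) (hXssymm : Xs.IsSymm)
    (hmin : ∀ X : Matrix (Fin n) (Fin n) ℝ, X.PosDef → X.IsSymm → X ≠ Xs →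
        (Cm * Xs).trace - Real.log Xs.det
            + ∑ i, ∑ j, (if i ≠ j then lam i j * |Xs i j| else 0)
          < (Cm * X).trace - Real.log X.det
            + ∑ i, ∑ j, (if i ≠ j then lam i j * |X i j| else 0))
    (p q : Fin n) (hpq : p ≠ q) (c : ℝ) (hc : c ≠ 0)
    (pb δ₀ : ℝ) (hδ₀ : 0 < δ₀)
    (hpen : ∀ t : ℝ, 0 < t → t < δ₀ →
      2 * lam p q * (|Xs p q + t * c| - |Xs p q|) ≤ t * pb)
    (hslope : 2 * c * Cm p q - 2 * c * Xs⁻¹ p q + pb < 0) : False := by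
  set E := Matrix.single p q c + Matrix.single q p c with hEdef
  have hEsymm : E.IsSymm := by
    rw [Matrix.IsSymm, hEdef, Matrix.transpose_add, aux_std_transpose, aux_std_transpose,
      add_comm]
  have hEne : E ≠ 0 := by
    intro h
    have hent := congrFun (congrFun h p) q
    rw [hEdef, Matrix.add_apply, Matrix.single_apply_same,
      Matrix.single_apply_of_ne _ _ _ _ _ (fun hh => hpq hh.1.symm),
      Matrix.zero_apply, add_zero] at hent
    exact hc hent
  have hCpq : Cm q p = Cm p q := aux_symm_entry hCsymm p q
  have hinvsymm : (Xs⁻¹)ᵀ = Xs⁻¹ := by rw [Matrix.transpose_nonsing_inv, hXssymm]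
  have hinvpq : Xs⁻¹ q p = Xs⁻¹ p q := aux_symm_entry hinvsymm p q
  have hXspq : Xs q p = Xs p q := aux_symm_entry hXssymm p q
  refine aux_descent hXs hXssymm hmin E hEsymm hEne pb δ₀ hδ₀ ?_ ?_
  · intro t ht0 ht1
    have hsm : t • E = (t*c) • (Matrix.single p q (1:ℝ) + Matrix.single q p (1:ℝ)) := by
      rw [hEdef, smul_add, smul_add, Matrix.smul_single, Matrix.smul_single,
        Matrix.smul_single, Matrix.smul_single]
      simp
    rw [hsm, aux_pen_offdiag lam Xs p q hpq (t*c)]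
    have hb := hpen t ht0 ht1
    rw [hXspq, ← hlamsymm p q]
    linarith
  · have h1 : (Cm * E).trace = c * Cm q p + c * Cm p q := by
      rw [hEdef, Matrix.mul_add, Matrix.trace_add, aux_trace_mul_stdc, aux_trace_mul_stdc]
    have h2 : (Xs⁻¹ * E).trace = c * Xs⁻¹ q p + c * Xs⁻¹ p q := by
      rw [hEdef, Matrix.mul_add, Matrix.trace_add, aux_trace_mul_stdc, aux_trace_mul_stdc]
    rw [h1, h2, hCpq, hinvpq]
    linarith

end GlassoAux
/-- KKT conditions for the ℓ₁-regularized Gaussian MLE (graphical lasso): `X*` is the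
unique optimal solution of `min_{X ≻ 0} tr(CX) - log det X + Σ_{i≠j} λ_{ij}|X_{ij}|`
iff `X* ≻ 0` and the stated stationarity conditions on `(X*)⁻¹` hold. -/
theorem stmt_10 {n : ℕ} (C : Matrix (Fin n) (Fin n) ℝ) (hC : C.IsSymm)
    (lam : Fin n → Fin n → ℝ) (hlamsymm : ∀ i j, lam i j = lam j i)
    (hlampos : ∀ i j, i ≠ j → 0 < lam i j)
    (Xs : Matrix (Fin n) (Fin n) ℝ) (hXssymm : Xs.IsSymm) :
    (Xs.PosDef ∧ ∀ X : Matrix (Fin n) (Fin n) ℝ, X.PosDef → X.IsSymm → X ≠ Xs →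
        (C * Xs).trace - Real.log Xs.det
            + ∑ i, ∑ j, (if i ≠ j then lam i j * |Xs i j| else 0)
          < (C * X).trace - Real.log X.det
            + ∑ i, ∑ j, (if i ≠ j then lam i j * |X i j| else 0)) ↔
      (Xs.PosDef ∧
        (∀ i : Fin n, Xs⁻¹ i i = C i i) ∧
        (∀ i j : Fin n, i ≠ j → Xs i j ≠ 0 →
          Xs⁻¹ i j = C i j + lam i j * Real.sign (Xs i j)) ∧
        (∀ i j : Fin n, i ≠ j → Xs i j = 0 →
          C i j - lam i j ≤ Xs⁻¹ i j ∧ Xs⁻¹ i j ≤ C i j + lam i j)) := by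
  constructor
  · rintro ⟨hXs, hm⟩
    refine ⟨hXs, ?_, ?_, ?_⟩
    · -- diagonal stationarity
      intro i
      by_contra hne
      rcases lt_or_gt_of_ne hne with hlt | hgt
      · -- Xs⁻¹ i i < C i i : descend along -e_ii
        refine aux_descent hXs hXssymm hm (Matrix.single i i (-1)) ?_ ?_ 0 1 one_pos ?_ ?_
        · rw [Matrix.IsSymm, aux_std_transpose]
        · intro h
          have := congrFun (congrFun h i) i
          simp at this
        · intro t ht0 ht1
          rw [aux_pen_diagc]
          simp
        · rw [aux_trace_mul_stdc, aux_trace_mul_stdc]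
          linarith
      · refine aux_descent hXs hXssymm hm (Matrix.single i i 1) ?_ ?_ 0 1 one_pos ?_ ?_
        · rw [Matrix.IsSymm, aux_std_transpose]
        · intro h
          have := congrFun (congrFun h i) i
          simp at this
        · intro t ht0 ht1
          rw [aux_pen_diagc]
          simp
        · rw [aux_trace_mul_stdc, aux_trace_mul_stdc]
          linarith
    · -- off-diagonal, nonzero entries
      intro i j hij hx
      by_contra hne
      have habs : ∀ (c t : ℝ), c = 1 ∨ c = -1 → 0 < t → t < |Xs i j| →
          |Xs i j + t * c| - |Xs i j| = t * c * Real.sign (Xs i j) := by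
        intro c t hc ht0 ht1
        rcases lt_trichotomy (Xs i j) 0 with hneg | hzero | hpos
        · rw [abs_of_neg hneg] at ht1
          rw [Real.sign_of_neg hneg, abs_of_neg hneg]
          rcases hc with rfl | rfl
          · rw [abs_of_neg (by linarith)]; ring
          · rw [abs_of_neg (by linarith)]; ring
        · exact absurd hzero hx
        · rw [abs_of_pos hpos] at ht1
          rw [Real.sign_of_pos hpos, abs_of_pos hpos]
          rcases hc with rfl | rfl
          · rw [abs_of_pos (by linarith)]; ring
          · rw [abs_of_pos (by linarith)]; ring
      rcases lt_or_gt_of_ne hne with hlt | hgt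
      · -- Xs⁻¹ i j < C i j + lam i j * sign : descend with c = -1
        refine aux_offdiag_descent hC hlamsymm hXs hXssymm hm i j hij (-1) (by norm_num)
          (2 * lam i j * (-1) * Real.sign (Xs i j)) |Xs i j| (abs_pos.mpr hx) ?_ ?_
        · intro t ht0 ht1
          rw [habs (-1) t (Or.inr rfl) ht0 ht1]
          exact le_of_eq (by ring)
        · have hs := Real.sign_apply_eq_of_ne_zero (Xs i j) hx
          nlinarith [hlt]
      · refine aux_offdiag_descent hC hlamsymm hXs hXssymm hm i j hij 1 one_ne_zero
          (2 * lam i j * 1 * Real.sign (Xs i j)) |Xs i j| (abs_pos.mpr hx) ?_ ?_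
        · intro t ht0 ht1
          rw [habs 1 t (Or.inl rfl) ht0 ht1]
          exact le_of_eq (by ring)
        · nlinarith [hgt]
    · -- off-diagonal, zero entries
      intro i j hij hx
      constructor
      · by_contra hcon
        push_neg at hcon
        refine aux_offdiag_descent hC hlamsymm hXs hXssymm hm i j hij (-1) (by norm_num)
          (2 * lam i j) 1 one_pos ?_ ?_
        · intro t ht0 ht1
          rw [hx]
          rw [show |(0:ℝ) + t * (-1)| - |(0:ℝ)| = t by
            rw [abs_zero, zero_add, abs_of_neg (by linarith : t * (-1) < 0)]; ring]
          exact le_of_eq (by ring)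
        · linarith
      · by_contra hcon
        push_neg at hcon
        refine aux_offdiag_descent hC hlamsymm hXs hXssymm hm i j hij 1 one_ne_zero
          (2 * lam i j) 1 one_pos ?_ ?_
        · intro t ht0 ht1
          rw [hx]
          rw [show |(0:ℝ) + t * 1| - |(0:ℝ)| = t by
            rw [abs_zero, zero_add, abs_of_pos (by linarith : 0 < t * 1)]; ring]
          exact le_of_eq (by ring)
        · linarith
  · rintro ⟨hXs, h1, h2, h3⟩
    exact ⟨hXs, fun X hX hXsym hne =>
      aux_backward hC hlampos hXssymm hXs h1 h2 h3 X hX hXsym hne⟩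
end

section
/- Let C be symmetric positive semidefinite, X ≻ 0, and suppose that for some i ≠ j: (X⁻¹)_{ii} = C_{ii}, (X⁻¹)_{jj} = C_{jj}, and (X⁻¹)_{ij} = C_{ij} + 2(max_k C_{kk}) s for some s ∈ {−1, 1}. Then (X⁻¹)_{ii}(X⁻¹)_{jj} − ((X⁻¹)_{ij})² ≤ C_{ii}C_{jj} − (max_k C_{kk})² ≤ 0, contradicting positive definiteness of X⁻¹. Hence no such X exists. -/
lemma quad_eval {n : ℕ} (M : Matrix (Fin n) (Fin n) ℝ) (i j : Fin n) (a b : ℝ) :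
    dotProduct (star (Pi.single i a + Pi.single j b)) (M.mulVec (Pi.single i a + Pi.single j b))
      = a * (M i i * a) + a * (M i j * b) + (b * (M j i * a) + b * (M j j * b)) := by
  simp [Matrix.mulVec_add, Matrix.mulVec_single, dotProduct_add,
    add_dotProduct, single_dotProduct]
  ring

lemma diag_pos' {n : ℕ} (M : Matrix (Fin n) (Fin n) ℝ) (hM : M.PosDef) (j : Fin n) :
    0 < M j j := by
  have h := hM.dotProduct_mulVec_pos (x := Pi.single j 1) (by
    intro h; have := congrFun h j; simp at this)
  simpa [Matrix.mulVec_single, single_dotProduct] using h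

lemma minor_pos {n : ℕ} (M : Matrix (Fin n) (Fin n) ℝ) (hM : M.PosDef) (i j : Fin n)
    (hij : i ≠ j) : 0 < M i i * M j j - M i j * M i j := by
  have hsym : M j i = M i j := by
    have := hM.1.apply i j; simpa using this
  have hjj := diag_pos' M hM j
  have hv : (Pi.single i (M j j) + Pi.single j (-(M i j)) : Fin n → ℝ) ≠ 0 := by
    intro h
    have := congrFun h i
    simp [Pi.single_eq_of_ne hij] at this
    exact hjj.ne' this
  have h := hM.dotProduct_mulVec_pos hv
  rw [quad_eval] at h
  rw [hsym] at h
  nlinarith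

lemma cs {n : ℕ} (C : Matrix (Fin n) (Fin n) ℝ) (hC : C.PosSemidef) (i j : Fin n) :
    C i j * C i j ≤ C i i * C j j := by
  have hsym : C j i = C i j := by
    have := hC.1.apply i j; simpa using this
  have hd : discrim (C i i) (2 * C i j) (C j j) ≤ 0 := by
    apply discrim_le_zero
    intro t
    have h := hC.dotProduct_mulVec_nonneg (Pi.single i t + Pi.single j 1)
    rw [quad_eval] at h
    rw [hsym] at h
    nlinarith
  rw [discrim] at hd
  nlinarith

/-- Let `C` be symmetric positive semidefinite with positive maximal diagonal entry, and
`i ≠ j`. There is no symmetric positive definite `X` with `(X⁻¹)_{ii} = C_{ii}`,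
`(X⁻¹)_{jj} = C_{jj}` and `(X⁻¹)_{ij} = C_{ij} + 2 (max_k C_{kk}) s` for some
`s ∈ {−1, 1}`: this would force a nonpositive `2×2` principal minor of `X⁻¹`,
contradicting its positive definiteness. -/
theorem stmt_14 {n : ℕ} (C X : Matrix (Fin n) (Fin n) ℝ)
    (hC : C.PosSemidef) (hX : X.PosDef)
    (i j : Fin n) (hij : i ≠ j)
    (hmax : 0 < Finset.univ.sup' ⟨i, Finset.mem_univ i⟩ (fun k => C k k))
    (s : ℝ) (hs : s = -1 ∨ s = 1)
    (hii : X⁻¹ i i = C i i) (hjj : X⁻¹ j j = C j j)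
    (hoff : X⁻¹ i j
      = C i j + 2 * (Finset.univ.sup' ⟨i, Finset.mem_univ i⟩ (fun k => C k k)) * s) :
    False := by
  set m := Finset.univ.sup' ⟨i, Finset.mem_univ i⟩ (fun k => C k k) with hm
  have hCi : C i i ≤ m := Finset.le_sup' (fun k => C k k) (Finset.mem_univ i)
  have hCj : C j j ≤ m := Finset.le_sup' (fun k => C k k) (Finset.mem_univ j)
  have hCi0 : 0 ≤ C i i := by
    have h := hC.dotProduct_mulVec_nonneg (Pi.single i 1)
    simpa [Matrix.mulVec_single, single_dotProduct] using h
  have hCj0 : 0 ≤ C j j := by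
    have h := hC.dotProduct_mulVec_nonneg (Pi.single j 1)
    simpa [Matrix.mulVec_single, single_dotProduct] using h
  have hcs := cs C hC i j
  have hminor := minor_pos X⁻¹ hX.inv i j hij
  rw [hii, hjj, hoff] at hminor
  rcases hs with rfl | rfl <;> nlinarith [sq_nonneg (C i j + m), sq_nonneg (C i j - m)]
end

section
/- Let g: ℝ^m → ℝ be defined by g(y) = f_*(C − A(y)) where f_* is the conjugate log-det barrier, A is a linear map with orthonormal columns (Aᵀ∘A = id), and Aᵀ(C) = 0. If ŷ minimizes g, then Aᵀ(X̂) = 0 where X̂ is the unique matrix in K satisfying P_V(X̂⁻¹) = C − A(ŷ), and moreover tr(X⁻¹ X̂) = n for any X ∈ K with P_V(X⁻¹) = C − A(y), y ∈ ℝ^m. -/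
/-!
Write `X̂ = Bᴴ B`. For every admissible `W`, the matrix `K = B⁻ᴴ W B⁻¹` is positive definite
and `tr(X̂⁻¹ W) - log det W = tr K - log det K + n - log det X̂`, where `tr K - log det K ≥ n`;
so the infimum defining `g(ŷ)` is attained at `X̂` and `g(ŷ) = log det X̂ - n`. Diagonalising
`K`, the eigenwise inequality `s - 2 s² ≤ λ - 1 - log λ + s λ` (for `s ≥ -1/2`) shows that
moving to `y = ŷ - t Aᵀ(X̂)` lowers `g` by `t ‖Aᵀ(X̂)‖² - O(t²)`, so minimality of `ŷ` forces
`Aᵀ(X̂) = 0`. Then `tr(X⁻¹ X̂) = tr(P_V(X⁻¹) X̂) = tr((C - A y) X̂) = tr(C X̂)` does not depend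
on `y`, and equals `n` at `y = ŷ`.
-/

open Matrix

variable {ι : Type*} [Fintype ι]

lemma sub_two_mul_sq_le_sub_one_sub_log_add_mul {s lam : ℝ} (hlam : 0 < lam) (hs : -(1 / 2) ≤ s) :
    s - 2 * s ^ 2 ≤ lam - 1 - Real.log lam + s * lam := by
  have h1s : 0 < 1 + s := by linarith
  have hμ := Real.log_le_sub_one_of_pos (mul_pos hlam h1s)
  have hinv := Real.log_le_sub_one_of_pos (inv_pos.2 h1s)
  rw [Real.log_mul hlam.ne' h1s.ne'] at hμ
  rw [Real.log_inv] at hinv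
  have hz : (1 + s) * (1 + s)⁻¹ = 1 := mul_inv_cancel₀ h1s.ne'
  nlinarith [sq_nonneg s, mul_nonneg (sq_nonneg s) (inv_pos.2 h1s).le]

lemma nonpos_of_forall_mul_le_sq {a c δ : ℝ} (hδ : 0 < δ)
    (h : ∀ t : ℝ, 0 < t → t ≤ δ → t * a ≤ t ^ 2 * c) : a ≤ 0 := by
  have hlim : Filter.Tendsto (fun t : ℝ => t * c) (nhdsWithin 0 (Set.Ioi 0)) (nhds 0) :=
    tendsto_nhdsWithin_of_tendsto_nhds
      ((continuous_id.mul continuous_const).tendsto' 0 0 (zero_mul c))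
  refine ge_of_tendsto hlim (Filter.mem_of_superset (Ioc_mem_nhdsGT hδ) fun t ⟨ht, htδ⟩ => ?_)
  have := h t ht htδ
  rw [sq, mul_assoc] at this
  exact le_of_mul_le_mul_left this ht

section Spectral

variable [DecidableEq ι]

lemma abs_conjTranspose_mul_mul_apply_self_le {U : Matrix ι ι ℝ} (hU : U ∈ unitaryGroup ι ℝ)
    (E : Matrix ι ι ℝ) (i : ι) : |(Uᴴ * E * U) i i| ≤ ∑ j, ∑ k, |E j k| := by
  have hUle : ∀ j, |U j i| ≤ 1 := fun j => entry_norm_bound_of_unitary hU j i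
  calc |(Uᴴ * E * U) i i| = |∑ j, ∑ k, U j i * E j k * U k i| := by
        simp only [mul_apply, conjTranspose_apply, star_trivial, Finset.sum_mul]
        rw [Finset.sum_comm]
    _ ≤ ∑ j, ∑ k, |U j i * E j k * U k i| :=
        (Finset.abs_sum_le_sum_abs _ _).trans
          (Finset.sum_le_sum fun j _ => Finset.abs_sum_le_sum_abs _ _)
    _ ≤ ∑ j, ∑ k, |E j k| := by
        refine Finset.sum_le_sum fun j _ => Finset.sum_le_sum fun k _ => ?_
        rw [abs_mul, abs_mul]
        calc |U j i| * |E j k| * |U k i| ≤ 1 * |E j k| * 1 := by gcongr <;> exact hUle _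
          _ = |E j k| := by ring

lemma Matrix.IsHermitian.trace_mul_eq_sum_diag_mul_eigenvalues {K : Matrix ι ι ℝ}
    (hK : K.IsHermitian) (E : Matrix ι ι ℝ) :
    (E * K).trace = ∑ i, (star (hK.eigenvectorUnitary : Matrix ι ι ℝ) * E *
      hK.eigenvectorUnitary) i i * hK.eigenvalues i := by
  have hK_eq : K = hK.eigenvectorUnitary * diagonal hK.eigenvalues *
      star (hK.eigenvectorUnitary : Matrix ι ι ℝ) := by
    simpa [Unitary.conjStarAlgAut_apply, RCLike.ofReal_real_eq_id] using hK.spectral_theorem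
  conv_lhs => rw [hK_eq, ← Matrix.mul_assoc, trace_mul_comm, ← Matrix.mul_assoc, ← Matrix.mul_assoc]
  simp [trace, mul_diagonal]

lemma Matrix.PosDef.mul_trace_sub_le_trace_sub_log_det_add_mul_trace {K : Matrix ι ι ℝ}
    (hK : K.PosDef) {E : Matrix ι ι ℝ} {t : ℝ}
    (ht : |t| * ∑ j, ∑ k, |E j k| ≤ 1 / 2) :
    t * E.trace - 2 * t ^ 2 * (∑ j, ∑ k, |E j k|) ^ 2 * Fintype.card ι ≤
      K.trace - Fintype.card ι - Real.log K.det + t * (E * K).trace := by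
  set M := ∑ j, ∑ k, |E j k|
  have hH := hK.1
  set U : Matrix ι ι ℝ := (hH.eigenvectorUnitary : Matrix ι ι ℝ)
  set lam := hH.eigenvalues
  set e : ι → ℝ := fun i => (star U * E * U) i i
  have hUU : U * star U = 1 := (mem_unitaryGroup_iff).mp hH.eigenvectorUnitary.2
  have htr_E : E.trace = ∑ i, e i := by
    rw [← Matrix.one_mul E, ← hUU, Matrix.mul_assoc, trace_mul_comm]; rfl
  have htr_K : K.trace = ∑ i, lam i := by simpa using hH.trace_eq_sum_eigenvalues
  have htr_EK : (E * K).trace = ∑ i, e i * lam i := hH.trace_mul_eq_sum_diag_mul_eigenvalues E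
  have hlogdet : Real.log K.det = ∑ i, Real.log (lam i) := by
    rw [hH.det_eq_prod_eigenvalues]
    simpa using Real.log_prod (fun i _ => (hK.eigenvalues_pos i).ne')
  have he : ∀ i, |e i| ≤ M := abs_conjTranspose_mul_mul_apply_self_le hH.eigenvectorUnitary.2 E
  have hterm : ∀ i, t * e i - 2 * t ^ 2 * M ^ 2 ≤
      lam i - 1 - Real.log (lam i) + t * e i * lam i := by
    intro i
    have hte : |t * e i| ≤ 1 / 2 := by
      rw [abs_mul]; exact (mul_le_mul_of_nonneg_left (he i) (abs_nonneg t)).trans ht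
    have hsq : (t * e i) ^ 2 ≤ t ^ 2 * M ^ 2 := by
      rw [mul_pow, ← sq_abs (e i)]
      exact mul_le_mul_of_nonneg_left (pow_le_pow_left₀ (abs_nonneg _) (he i) 2) (sq_nonneg t)
    have := sub_two_mul_sq_le_sub_one_sub_log_add_mul (hK.eigenvalues_pos i) (abs_le.1 hte).1
    linarith
  calc t * E.trace - 2 * t ^ 2 * M ^ 2 * Fintype.card ι
      = ∑ i, (t * e i - 2 * t ^ 2 * M ^ 2) := by
        rw [htr_E, Finset.sum_sub_distrib, Finset.mul_sum]; simp [mul_comm]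
    _ ≤ ∑ i, (lam i - 1 - Real.log (lam i) + t * e i * lam i) :=
        Finset.sum_le_sum fun i _ => hterm i
    _ = K.trace - Fintype.card ι - Real.log K.det + t * (E * K).trace := by
        rw [htr_K, hlogdet, htr_EK, Finset.mul_sum]
        simp [Finset.sum_add_distrib, Finset.sum_sub_distrib, mul_assoc]

lemma Matrix.PosDef.exists_units_eq_conjTranspose_mul {X : Matrix ι ι ℝ} (hX : X.PosDef) :
    ∃ B : (Matrix ι ι ℝ)ˣ, X = (B : Matrix ι ι ℝ)ᴴ * B := by
  open scoped MatrixOrder in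
  obtain ⟨B, hB, rfl⟩ :=
    CStarAlgebra.isStrictlyPositive_iff_eq_star_mul_self.mp hX.isStrictlyPositive
  lift B to (Matrix ι ι ℝ)ˣ using hB
  exact ⟨B, rfl⟩

lemma Matrix.PosDef.exists_le_trace_inv_mul_add_trace_mul_sub_log_det {X : Matrix ι ι ℝ}
    (hX : X.PosDef) (E : Matrix ι ι ℝ) :
    ∃ M : ℝ, 0 ≤ M ∧ ∀ t : ℝ, |t| * M ≤ 1 / 2 → ∀ W : Matrix ι ι ℝ, W.PosDef →
      Fintype.card ι - Real.log X.det + t * (E * X).trace - 2 * t ^ 2 * M ^ 2 * Fintype.card ι ≤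
        (X⁻¹ * W).trace + t * (E * W).trace - Real.log W.det := by
  obtain ⟨B, rfl⟩ := hX.exists_units_eq_conjTranspose_mul
  set P : Matrix ι ι ℝ := ↑B
  set Q : Matrix ι ι ℝ := ↑B⁻¹
  have hPQ : P * Q = 1 := B.mul_inv
  have hQP : Q * P = 1 := B.inv_mul
  have hPQ_conj : Pᴴ * Qᴴ = 1 := by rw [← conjTranspose_mul, hQP, conjTranspose_one]
  have hXinv : (Pᴴ * P)⁻¹ = Q * Qᴴ := by
    refine inv_eq_right_inv ?_
    rw [Matrix.mul_assoc, ← Matrix.mul_assoc P, hPQ, Matrix.one_mul, hPQ_conj]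
  have hdet : Q.det * P.det = 1 := by rw [← det_mul, hQP, det_one]
  set Et := P * E * Pᴴ
  refine ⟨∑ j, ∑ k, |Et j k|, by positivity, fun t ht W hW => ?_⟩
  set K := Qᴴ * W * Q
  have hK : K.PosDef := hW.conjTranspose_mul_mul_same (mulVec_injective_of_isUnit B⁻¹.isUnit)
  have htr_K : K.trace = (Q * Qᴴ * W).trace := trace_mul_cycle _ _ _
  have htr_EtK : (Et * K).trace = (E * W).trace := by
    calc (Et * K).trace = (P * (E * W * Q)).trace := by
          simp only [Et, K, Matrix.mul_assoc]
          rw [← Matrix.mul_assoc Pᴴ, hPQ_conj, Matrix.one_mul]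
      _ = (E * W).trace := by rw [trace_mul_comm, Matrix.mul_assoc, hQP, Matrix.mul_one]
  have htr_Et : Et.trace = (E * (Pᴴ * P)).trace := by rw [trace_mul_cycle, trace_mul_comm]
  have hdet_K : Real.log K.det = Real.log W.det - Real.log (Pᴴ * P).det := by
    have hK_mul : K.det * (Pᴴ * P).det = W.det := by
      simp only [K, det_mul, det_conjTranspose, star_trivial]
      linear_combination W.det * (Q.det * P.det + 1) * hdet
    rw [← hK_mul, Real.log_mul hK.det_pos.ne' hX.det_pos.ne', add_sub_cancel_right]
  have key := hK.mul_trace_sub_le_trace_sub_log_det_add_mul_trace ht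
  rw [htr_K, htr_EtK, htr_Et, hdet_K, ← hXinv] at key
  linarith

end Spectral

def patternProj (V : Set (ι × ι)) [DecidablePred (· ∈ V)] (M : Matrix ι ι ℝ) : Matrix ι ι ℝ :=
  Matrix.of fun i j => if (i, j) ∈ V then M i j else 0

lemma trace_patternProj_mul {V : Set (ι × ι)} [DecidablePred (· ∈ V)] (M : Matrix ι ι ℝ)
    {W : Matrix ι ι ℝ} (hW : W.IsHermitian) (hWV : ∀ i j, (i, j) ∉ V → W i j = 0) :
    (patternProj V M * W).trace = (M * W).trace := by
  refine Finset.sum_congr rfl fun i _ => Finset.sum_congr rfl fun j _ => ?_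
  by_cases h : (i, j) ∈ V
  · simp [patternProj, h]
  · have hWji : W j i = W i j := by simpa using hW.apply i j
    simp [patternProj, h, hWji, hWV i j h]

def logDetObjValues [DecidableEq ι] (V : Set (ι × ι)) (S : Matrix ι ι ℝ) : Set ℝ :=
  {t | ∃ X : Matrix ι ι ℝ, X.PosDef ∧ (∀ i j, (i, j) ∉ V → X i j = 0) ∧
    t = (S * X).trace - Real.log X.det}

/-- The conjugate barrier `f_*(S)`. It is junk (`sInf` of a set unbounded below is `0`) unless the
objective is bounded below, as it is at `S = P_V(X⁻¹)` by `conjLogDet_eq`. -/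
noncomputable def conjLogDet [DecidableEq ι] (V : Set (ι × ι)) (S : Matrix ι ι ℝ) : ℝ :=
  -sInf (logDetObjValues V S)

section Pattern

variable [DecidableEq ι] {V : Set (ι × ι)} [DecidablePred (· ∈ V)] {X S : Matrix ι ι ℝ}

lemma exists_le_of_mem_logDetObjValues_add_smul (hX : X.PosDef) (hXS : patternProj V X⁻¹ = S)
    (E : Matrix ι ι ℝ) :
    ∃ M : ℝ, 0 ≤ M ∧ ∀ t : ℝ, |t| * M ≤ 1 / 2 → ∀ b ∈ logDetObjValues V (S + t • E),
      Fintype.card ι - Real.log X.det + t * (E * X).trace - 2 * t ^ 2 * M ^ 2 * Fintype.card ι ≤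
        b := by
  obtain ⟨M, hM, hle⟩ := hX.exists_le_trace_inv_mul_add_trace_mul_sub_log_det E
  refine ⟨M, hM, fun t ht b ⟨W, hW, hWV, hb⟩ => ?_⟩
  rw [hb, add_mul, trace_add, smul_mul, trace_smul, smul_eq_mul, ← hXS,
    trace_patternProj_mul _ hW.1 hWV]
  exact hle t ht W hW

lemma trace_mul_eq_card (hX : X.PosDef) (hXV : ∀ i j, (i, j) ∉ V → X i j = 0)
    (hXS : patternProj V X⁻¹ = S) : (S * X).trace = Fintype.card ι := by
  rw [← hXS, trace_patternProj_mul _ hX.1 hXV,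
    nonsing_inv_mul _ ((isUnit_iff_isUnit_det X).1 hX.isUnit), trace_one]

lemma conjLogDet_eq (hX : X.PosDef) (hXV : ∀ i j, (i, j) ∉ V → X i j = 0)
    (hXS : patternProj V X⁻¹ = S) : conjLogDet V S = Real.log X.det - Fintype.card ι := by
  obtain ⟨M, -, hle⟩ := exists_le_of_mem_logDetObjValues_add_smul hX hXS 0
  have hmin : IsLeast (logDetObjValues V S) (Fintype.card ι - Real.log X.det) := by
    refine ⟨⟨X, hX, hXV, ?_⟩, fun b hb => ?_⟩
    · rw [trace_mul_eq_card hX hXV hXS]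
    · simpa using hle 0 (by simp) b (by simpa using hb)
  rw [conjLogDet, hmin.csInf_eq]
  ring

lemma exists_conjLogDet_add_smul_le (hX : X.PosDef) (hXV : ∀ i j, (i, j) ∉ V → X i j = 0)
    (hXS : patternProj V X⁻¹ = S) (E : Matrix ι ι ℝ) :
    ∃ c δ : ℝ, 0 < δ ∧ ∀ t : ℝ, 0 < t → t ≤ δ →
      conjLogDet V (S + t • E) ≤ conjLogDet V S - t * (E * X).trace + t ^ 2 * c := by
  obtain ⟨M, hM, hle⟩ := exists_le_of_mem_logDetObjValues_add_smul hX hXS E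
  refine ⟨2 * M ^ 2 * Fintype.card ι, 1 / (2 * M + 1), by positivity, fun t ht htδ => ?_⟩
  have htM : |t| * M ≤ 1 / 2 := by
    rw [abs_of_pos ht]
    calc t * M ≤ 1 / (2 * M + 1) * M := by gcongr
      _ ≤ 1 / 2 := by rw [div_mul_eq_mul_div, div_le_div_iff₀ (by positivity) two_pos]; linarith
  have hne : (logDetObjValues V (S + t • E)).Nonempty := ⟨_, X, hX, hXV, rfl⟩
  have := le_csInf hne (hle t htM)
  rw [conjLogDet_eq hX hXV hXS, conjLogDet]
  linarith

end Pattern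

theorem stmt_15_general {n m : ℕ} (V : Set (Fin n × Fin n)) [DecidablePred (· ∈ V)]
    (C : Matrix (Fin n) (Fin n) ℝ)
    (A : (Fin m → ℝ) →ₗ[ℝ] Matrix (Fin n) (Fin n) ℝ)
    (AT : Matrix (Fin n) (Fin n) ℝ →ₗ[ℝ] (Fin m → ℝ))
    (hadj : ∀ (y : Fin m → ℝ) (X : Matrix (Fin n) (Fin n) ℝ),
      ((A y) * X).trace = y ⬝ᵥ AT X)
    (g : (Fin m → ℝ) → ℝ)
    (hg : ∀ y : Fin m → ℝ, g y =
      -sInf {t : ℝ | ∃ X : Matrix (Fin n) (Fin n) ℝ, X.PosDef ∧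
        (∀ i j : Fin n, (i, j) ∉ V → X i j = 0) ∧
        t = ((C - A y) * X).trace - Real.log X.det})
    (yhat : Fin m → ℝ) (Xhat : Matrix (Fin n) (Fin n) ℝ)
    (hXhatPD : Xhat.PosDef)
    (hXhatsupp : ∀ i j : Fin n, (i, j) ∉ V → Xhat i j = 0)
    (hXhatproj : (Matrix.of fun i j : Fin n =>
      if (i, j) ∈ V then Xhat⁻¹ i j else 0) = C - A yhat)
    (hopt : ∀ y : Fin m → ℝ, g yhat ≤ g y) :
    AT Xhat = 0 ∧
      ∀ (y : Fin m → ℝ) (X : Matrix (Fin n) (Fin n) ℝ), X.PosDef →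
        (∀ i j : Fin n, (i, j) ∉ V → X i j = 0) →
        (Matrix.of fun i j : Fin n => if (i, j) ∈ V then X⁻¹ i j else 0) = C - A y →
        (X⁻¹ * Xhat).trace = (n : ℝ) := by
  have hg' : ∀ y, g y = conjLogDet V (C - A y) := hg
  obtain ⟨c, δ, hδ, hle⟩ := exists_conjLogDet_add_smul_le hXhatPD hXhatsupp hXhatproj (A (AT Xhat))
  have hdescent : ∀ t : ℝ, 0 < t → t ≤ δ → t * (AT Xhat ⬝ᵥ AT Xhat) ≤ t ^ 2 * c := by
    intro t ht htδ
    have hstep : C - A (yhat - t • AT Xhat) = (C - A yhat) + t • A (AT Xhat) := by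
      rw [map_sub, map_smul]; abel
    have := hopt (yhat - t • AT Xhat)
    rw [hg', hg', hstep] at this
    have := hle t ht htδ
    rw [hadj] at this
    linarith
  have hv : AT Xhat = 0 := dotProduct_self_eq_zero.1 <|
    le_antisymm (nonpos_of_forall_mul_le_sq hδ hdescent) (dotProduct_self_star_nonneg _)
  refine ⟨hv, fun y X _ _ hX => ?_⟩
  have htr_A : ∀ z, (A z * Xhat).trace = 0 := fun z => by rw [hadj, hv, dotProduct_zero]
  have hXproj : patternProj V X⁻¹ = C - A y := hX
  calc (X⁻¹ * Xhat).trace = ((C - A y) * Xhat).trace := by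
        rw [← hXproj, trace_patternProj_mul _ hXhatPD.1 hXhatsupp]
    _ = ((C - A yhat) * Xhat).trace := by
        rw [sub_mul, sub_mul, trace_sub, trace_sub, htr_A, htr_A]
    _ = n := by rw [trace_mul_eq_card hXhatPD hXhatsupp hXhatproj, Fintype.card_fin]

/-- Dual MDMC problem: `g(y) = f_*(C − A(y))` with `f_*` the conjugate log-det barrier
on the sparsity pattern `V`, `A` linear with orthonormal columns (`Aᵀ∘A = id`) and
`Aᵀ(C) = 0`. If `ŷ` minimizes `g`, then `Aᵀ(X̂) = 0`, where `X̂ ∈ K` is the unique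
matrix with `P_V(X̂⁻¹) = C − A(ŷ)`; moreover `tr(X⁻¹ X̂) = n` for any `X ∈ K` with
`P_V(X⁻¹) = C − A(y)`, `y ∈ ℝ^m`. -/
theorem stmt_15 {n m : ℕ} (V : Set (Fin n × Fin n)) [DecidablePred (· ∈ V)]
    (C : Matrix (Fin n) (Fin n) ℝ)
    (A : (Fin m → ℝ) →ₗ[ℝ] Matrix (Fin n) (Fin n) ℝ)
    (AT : Matrix (Fin n) (Fin n) ℝ →ₗ[ℝ] (Fin m → ℝ))
    (hadj : ∀ (y : Fin m → ℝ) (X : Matrix (Fin n) (Fin n) ℝ),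
      ((A y) * X).trace = y ⬝ᵥ AT X)
    (horth : ∀ y : Fin m → ℝ, AT (A y) = y)
    (hATC : AT C = 0)
    (g : (Fin m → ℝ) → ℝ)
    (hg : ∀ y : Fin m → ℝ, g y =
      -sInf {t : ℝ | ∃ X : Matrix (Fin n) (Fin n) ℝ, X.PosDef ∧
        (∀ i j : Fin n, (i, j) ∉ V → X i j = 0) ∧
        t = ((C - A y) * X).trace - Real.log X.det})
    (yhat : Fin m → ℝ) (Xhat : Matrix (Fin n) (Fin n) ℝ)
    (hXhatPD : Xhat.PosDef)
    (hXhatsupp : ∀ i j : Fin n, (i, j) ∉ V → Xhat i j = 0)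
    (hXhatproj : (Matrix.of fun i j : Fin n =>
      if (i, j) ∈ V then Xhat⁻¹ i j else 0) = C - A yhat)
    (hopt : ∀ y : Fin m → ℝ, g yhat ≤ g y) :
    AT Xhat = 0 ∧
      ∀ (y : Fin m → ℝ) (X : Matrix (Fin n) (Fin n) ℝ), X.PosDef →
        (∀ i j : Fin n, (i, j) ∉ V → X i j = 0) →
        (Matrix.of fun i j : Fin n => if (i, j) ∈ V then X⁻¹ i j else 0) = C - A y →
        (X⁻¹ * Xhat).trace = (n : ℝ) :=
  stmt_15_general V C A AT hadj g hg yhat Xhat hXhatPD hXhatsupp hXhatproj hopt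
end

section
/- Suppose y satisfies g(y) ≤ g(y₀) and ∇g(y)ᵀ(y − y₀) ≤ φ_max, where φ_max = g(y₀) − g(ŷ) = log det X₀ − log det X̂. Then φ(X̂ X⁻¹) ≤ φ_max and φ(X X₀⁻¹) ≤ 2φ_max, where φ(M) = tr(M) − log det(M) − n, and X₀, X, X̂ are the matrices in K with P_V(X⁻¹) equal to C − A(y₀), C − A(y), C − A(ŷ) respectively. -/
open Matrix

lemma trace_eq_sum_eigs {N : ℕ} {P : Matrix (Fin N) (Fin N) ℝ} (hH : P.IsHermitian) :
    P.trace = ∑ i, hH.eigenvalues i := by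
  conv_lhs => rw [hH.spectral_theorem]
  rw [Unitary.conjStarAlgAut_apply, Matrix.trace_mul_cycle, Unitary.coe_star_mul_self, one_mul, Matrix.trace_diagonal]
  simp

lemma log_det_le_trace {N : ℕ} {P : Matrix (Fin N) (Fin N) ℝ} (hP : P.PosSemidef)
    (hdet : 0 < P.det) : Real.log P.det ≤ P.trace - N := by
  have hH := hP.1
  have hdet' : P.det = ∏ i, hH.eigenvalues i := by
    rw [hH.det_eq_prod_eigenvalues]; simp
  have hpos : ∀ i, 0 < hH.eigenvalues i := by
    intro i
    rcases (hP.eigenvalues_nonneg i).lt_or_eq with h | h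
    · exact h
    · exact absurd (hdet'.symm ▸ hdet)
        (by rw [Finset.prod_eq_zero (Finset.mem_univ i) h.symm]; exact lt_irrefl 0)
  rw [hdet', trace_eq_sum_eigs hH,
    Real.log_prod (fun i _ => (hpos i).ne')]
  have h1 : ∑ i, Real.log (hH.eigenvalues i) ≤ ∑ i, (hH.eigenvalues i - 1) :=
    Finset.sum_le_sum fun i _ => Real.log_le_sub_one_of_pos (hpos i)
  have h2 : ∑ i : Fin N, (hH.eigenvalues i - 1) = (∑ i, hH.eigenvalues i) - N := by
    rw [Finset.sum_sub_distrib]; simp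
  linarith

lemma trace_pv {N : ℕ} (V : Set (Fin N × Fin N)) [DecidablePred (· ∈ V)]
    {Y : Matrix (Fin N) (Fin N) ℝ} (hY : Y.IsHermitian)
    (hsupp : ∀ i j, (i, j) ∉ V → Y i j = 0) (Z : Matrix (Fin N) (Fin N) ℝ) :
    (Y * (Matrix.of fun i j : Fin N => if (i, j) ∈ V then Z i j else 0)).trace
      = (Y * Z).trace := by
  simp only [Matrix.trace, Matrix.diag, Matrix.mul_apply, Matrix.of_apply]
  refine Finset.sum_congr rfl fun i _ => Finset.sum_congr rfl fun j _ => ?_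
  by_cases h : (j, i) ∈ V
  · simp [h]
  · have hy : Y i j = 0 := by
      have := hY.apply i j
      simp at this
      rw [← this]
      exact hsupp j i h
    simp [h, hy]

/-- In the dual MDMC setup, suppose `g(y) ≤ g(y₀)` and `∇g(y)ᵀ(y − y₀) ≤ φ_max`, where
`φ_max = g(y₀) − g(ŷ) = log det X₀ − log det X̂`, `∇g(y) = Aᵀ(X)`, and `X₀, X, X̂ ∈ K`
are the matrices with `P_V(·⁻¹)` equal to `C − A(y₀)`, `C − A(y)`, `C − A(ŷ)`.
Then `φ(X̂X⁻¹) ≤ φ_max` and `φ(XX₀⁻¹) ≤ 2φ_max`, where `φ(M) = tr M − log det M − n`. -/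
theorem stmt_16 {n m : ℕ} (V : Set (Fin n × Fin n)) [DecidablePred (· ∈ V)]
    (C : Matrix (Fin n) (Fin n) ℝ)
    (A : (Fin m → ℝ) →ₗ[ℝ] Matrix (Fin n) (Fin n) ℝ)
    (AT : Matrix (Fin n) (Fin n) ℝ →ₗ[ℝ] (Fin m → ℝ))
    (hadj : ∀ (z : Fin m → ℝ) (M : Matrix (Fin n) (Fin n) ℝ),
      ((A z) * M).trace = z ⬝ᵥ AT M)
    (horth : ∀ z : Fin m → ℝ, AT (A z) = z)
    (hATC : AT C = 0)
    (y y0 yhat : Fin m → ℝ) (X X0 Xhat : Matrix (Fin n) (Fin n) ℝ)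
    (hXPD : X.PosDef) (hX0PD : X0.PosDef) (hXhatPD : Xhat.PosDef)
    (hXsupp : ∀ i j : Fin n, (i, j) ∉ V → X i j = 0)
    (hX0supp : ∀ i j : Fin n, (i, j) ∉ V → X0 i j = 0)
    (hXhatsupp : ∀ i j : Fin n, (i, j) ∉ V → Xhat i j = 0)
    (hXproj : (Matrix.of fun i j : Fin n =>
      if (i, j) ∈ V then X⁻¹ i j else 0) = C - A y)
    (hX0proj : (Matrix.of fun i j : Fin n =>
      if (i, j) ∈ V then X0⁻¹ i j else 0) = C - A y0)
    (hXhatproj : (Matrix.of fun i j : Fin n =>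
      if (i, j) ∈ V then Xhat⁻¹ i j else 0) = C - A yhat)
    -- first-order optimality of the minimizer `ŷ`:
    (hopt : AT Xhat = 0)
    -- `g(y) ≤ g(y₀)`, i.e. `log det X ≤ log det X₀`:
    (hdec : Real.log X.det ≤ Real.log X0.det)
    -- `∇g(y)ᵀ(y − y₀) ≤ φ_max` with `∇g(y) = Aᵀ(X)`:
    (hgrad : AT X ⬝ᵥ (y - y0) ≤ Real.log X0.det - Real.log Xhat.det) :
    (Xhat * X⁻¹).trace - Real.log (Xhat * X⁻¹).det - n
        ≤ Real.log X0.det - Real.log Xhat.det ∧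
      (X * X0⁻¹).trace - Real.log (X * X0⁻¹).det - n
        ≤ 2 * (Real.log X0.det - Real.log Xhat.det) := by
  have hXd : (0:ℝ) < X.det := hXPD.det_pos
  have hX0d : (0:ℝ) < X0.det := hX0PD.det_pos
  have hXhd : (0:ℝ) < Xhat.det := hXhatPD.det_pos
  have trAz : ∀ (Y : Matrix (Fin n) (Fin n) ℝ) (z : Fin m → ℝ),
      (Y * A z).trace = z ⬝ᵥ AT Y := fun Y z => by
    rw [Matrix.trace_mul_comm, hadj]
  -- trace of Xhat * C
  have hC : C = (Matrix.of fun i j : Fin n =>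
      if (i, j) ∈ V then Xhat⁻¹ i j else 0) + A yhat := by
    rw [hXhatproj]; abel
  have trXhatC : (Xhat * C).trace = (n : ℝ) := by
    conv_lhs => rw [hC]
    rw [Matrix.mul_add, Matrix.trace_add,
      trace_pv V hXhatPD.isHermitian hXhatsupp,
      Matrix.mul_nonsing_inv _ (isUnit_iff_ne_zero.mpr hXhatPD.det_pos.ne'), Matrix.trace_one, trAz, hopt]
    simp
  -- trace of Xhat * X⁻¹
  have trXhatXinv : (Xhat * X⁻¹).trace = (n : ℝ) := by
    have h := trace_pv V hXhatPD.isHermitian hXhatsupp X⁻¹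
    rw [hXproj] at h
    rw [← h, Matrix.mul_sub, Matrix.trace_sub, trXhatC, trAz, hopt]
    simp
  -- trace of X * C
  have hCX : C = (Matrix.of fun i j : Fin n =>
      if (i, j) ∈ V then X⁻¹ i j else 0) + A y := by
    rw [hXproj]; abel
  have trXC : (X * C).trace = (n : ℝ) + y ⬝ᵥ AT X := by
    conv_lhs => rw [hCX]
    rw [Matrix.mul_add, Matrix.trace_add,
      trace_pv V hXPD.isHermitian hXsupp,
      Matrix.mul_nonsing_inv _ (isUnit_iff_ne_zero.mpr hXPD.det_pos.ne'), Matrix.trace_one, trAz]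
    simp
  -- trace of X * X0⁻¹
  have trXX0inv : (X * X0⁻¹).trace = (n : ℝ) + (y ⬝ᵥ AT X - y0 ⬝ᵥ AT X) := by
    have h := trace_pv V hXPD.isHermitian hXsupp X0⁻¹
    rw [hX0proj] at h
    rw [← h, Matrix.mul_sub, Matrix.trace_sub, trXC, trAz]
    ring
  -- determinants
  have logdet1 : Real.log (Xhat * X⁻¹).det = Real.log Xhat.det - Real.log X.det := by
    rw [Matrix.det_mul, Matrix.det_nonsing_inv, Ring.inverse_eq_inv',
      Real.log_mul hXhd.ne' (inv_ne_zero hXd.ne'), Real.log_inv]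
    ring
  have logdet2 : Real.log (X * X0⁻¹).det = Real.log X.det - Real.log X0.det := by
    rw [Matrix.det_mul, Matrix.det_nonsing_inv, Ring.inverse_eq_inv',
      Real.log_mul hXd.ne' (inv_ne_zero hX0d.ne'), Real.log_inv]
    ring
  -- key spectral inequality: log det Xhat ≤ log det X
  have key : Real.log Xhat.det - Real.log X.det ≤ 0 := by
    have hs : (X⁻¹).PosSemidef := hXPD.inv.posSemidef
    set s := (open scoped MatrixOrder in CFC.sqrt (X⁻¹)) with hsdef
    have hsH : sᴴ = s := open scoped MatrixOrder in (CFC.sqrt_nonneg (X⁻¹)).posSemidef.1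
    have hss : s * s = X⁻¹ := open scoped MatrixOrder in CFC.sqrt_mul_sqrt_self (X⁻¹) hs.nonneg
    have hSpsd : (s * Xhat * s).PosSemidef := by
      have := hXhatPD.posSemidef.mul_mul_conjTranspose_same s
      rwa [hsH] at this
    have hSdet : (s * Xhat * s).det = Xhat.det * X⁻¹.det := by
      rw [Matrix.det_mul, Matrix.det_mul]
      have : s.det * s.det = X⁻¹.det := by rw [← Matrix.det_mul, hss]
      rw [mul_comm s.det Xhat.det, mul_assoc, this]
    have hSdetpos : 0 < (s * Xhat * s).det := by
      rw [hSdet]; exact mul_pos hXhd hXPD.inv.det_pos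
    have hStr : (s * Xhat * s).trace = (n : ℝ) := by
      rw [Matrix.trace_mul_cycle, hss, Matrix.trace_mul_comm,
        trXhatXinv]
    have hkey := log_det_le_trace hSpsd hSdetpos
    rw [hSdet, hStr, Real.log_mul hXhd.ne' hXPD.inv.det_pos.ne',
      Matrix.det_nonsing_inv, Ring.inverse_eq_inv', Real.log_inv] at hkey
    linarith
  have hgrad' : y ⬝ᵥ AT X - y0 ⬝ᵥ AT X ≤ Real.log X0.det - Real.log Xhat.det := by
    have : AT X ⬝ᵥ (y - y0) = y ⬝ᵥ AT X - y0 ⬝ᵥ AT X := by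
      rw [dotProduct_sub, dotProduct_comm (AT X) y, dotProduct_comm (AT X) y0]
    linarith [hgrad, this.symm.le, this.le]
  constructor
  · rw [trXhatXinv, logdet1]; linarith
  · rw [trXX0inv, logdet2]; linarith
end
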